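/- arXiv:math/9808106 — 4 statements merged into one kernel-verified Lean document; each statement's English description precedes it below -/
import Mathlib

section
/- Let F ∈ M with Deligne bigrading {I^{p,q}} of (F,W), let Lie(G_ℂ) := {α ∈ End(V) : α(W_k) ⊆ W_k for all k and S_k(Gr_k(α)u, v) + S_k(u, Gr_k(α)v) = 0 for all k, u, v}, with bigrading g^{r,s} := {α ∈ Lie(G_ℂ) : α(I^{p,q}) ⊆ I^{p+r,q+s} for all p,q}, and set n_+ := ⊕_{r≥0, s<0} g^{r,s}, n_0 := g^{0,0}, n_- := ⊕_{r<0, s≥0} g^{r,s}, λ := ⊕_{r<0, s<0} g^{r,s}. Then: (i) Lie(G_ℂ) = n_+ ⊕ n_0 ⊕ n_- ⊕ λ; (ii) q_F := ⊕_{r<0, r+s≤0} g^{r,s} equals n_- ⊕ λ and Lie(G_ℂ^F) := {α ∈ Lie(G_ℂ) : α(F^p) ⊆ F^p for all p} equals n_+ ⊕ n_0; and (iii) conj(n_+) ⊆ n_- ⊕ λ, conj(n_0) ⊆ n_0 ⊕ λ, conj(n_-) ⊆ n_+ ⊕ λ, and conj(λ) = λ. -/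
open Submodule

noncomputable section

instance : RingHomSurjective (starRingEnd ℂ) :=
  ⟨fun x => ⟨starRingEnd ℂ x, Complex.conj_conj x⟩⟩

variable {V : Type*} [AddCommGroup V] [Module ℂ V]

/-- A finite decreasing filtration of `V` by complex subspaces. -/
def IsDecFilt (F : ℤ → Submodule ℂ V) : Prop :=
  (∀ p : ℤ, F (p + 1) ≤ F p) ∧ (∃ a : ℤ, F a = ⊤) ∧ ∃ b : ℤ, F b = ⊥

/-- A finite increasing filtration of `V` by complex subspaces. -/
def IsIncFilt (W : ℤ → Submodule ℂ V) : Prop :=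
  (∀ k : ℤ, W k ≤ W (k + 1)) ∧ (∃ a : ℤ, W a = ⊥) ∧ ∃ b : ℤ, W b = ⊤

/-- The subspace `F^p ∩ W_k + W_{k-1}` of `V`, representing the `p`-th piece
`F^p Gr^W_k` of the induced filtration on `Gr^W_k = W_k/W_{k-1}`. -/
def grF (F W : ℤ → Submodule ℂ V) (k p : ℤ) : Submodule ℂ V :=
  F p ⊓ W k ⊔ W (k - 1)

/-- The subspace of `V` representing the Hodge piece
`H^{p,k-p} = F^p Gr^W_k ∩ conj (F^{k-p} Gr^W_k)` of `Gr^W_k`. -/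
def grH (σ : V →ₛₗ[starRingEnd ℂ] V) (F W : ℤ → Submodule ℂ V) (k p : ℤ) : Submodule ℂ V :=
  grF F W k p ⊓ grF (fun q => (F q).map σ) W k (k - p)

/-- The filtration induced by `F` on `Gr^W_k` is a pure Hodge structure of weight `k`:
the pieces `H^{p,k-p}` span `Gr^W_k` and are independent there (all subspaces of the
quotient are represented by their preimages in `V`, which contain `W_{k-1}`). -/
def IsPureOnGr (σ : V →ₛₗ[starRingEnd ℂ] V) (F W : ℤ → Submodule ℂ V) (k : ℤ) : Prop :=
  (⨆ p : ℤ, grH σ F W k p) = W k ∧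
  ∀ p : ℤ, grH σ F W k p ⊓ (⨆ (q : ℤ) (_ : q ≠ p), grH σ F W k q) = W (k - 1)

/-- `(F, W)` is a mixed Hodge structure on `V` (relative to the conjugation `σ`). -/
def IsMHS (σ : V →ₛₗ[starRingEnd ℂ] V) (F W : ℤ → Submodule ℂ V) : Prop :=
  IsDecFilt F ∧ IsIncFilt W ∧ (∀ k : ℤ, (W k).map σ = W k) ∧ ∀ k : ℤ, IsPureOnGr σ F W k

/-- `I` is a bigrading of the mixed Hodge structure `(F, W)`. -/
def IsBigrading (F W : ℤ → Submodule ℂ V) (I : ℤ → ℤ → Submodule ℂ V) : Prop :=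
  DirectSum.IsInternal (fun pq : ℤ × ℤ => I pq.1 pq.2) ∧
  (∀ p : ℤ, F p = ⨆ (rs : ℤ × ℤ) (_ : p ≤ rs.1), I rs.1 rs.2) ∧
  ∀ k : ℤ, W k = ⨆ (rs : ℤ × ℤ) (_ : rs.1 + rs.2 ≤ k), I rs.1 rs.2

/-- `⊕_{r < p, s < q} I^{r,s}`. -/
def lowPart (I : ℤ → ℤ → Submodule ℂ V) (p q : ℤ) : Submodule ℂ V :=
  ⨆ (rs : ℤ × ℤ) (_ : rs.1 < p ∧ rs.2 < q), I rs.1 rs.2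

/-- `I` is a bigrading of `(F, W)` satisfying the Deligne conjugation-symmetry
condition `I^{p,q} ≡ conj (I^{q,p}) mod ⊕_{r<p,s<q} I^{r,s}` (equality of images in the
quotient by `⊕_{r<p,s<q} I^{r,s}`). -/
def IsDeligne (σ : V →ₛₗ[starRingEnd ℂ] V) (F W : ℤ → Submodule ℂ V)
    (I : ℤ → ℤ → Submodule ℂ V) : Prop :=
  IsBigrading F W I ∧
  ∀ p q : ℤ, I p q ⊔ lowPart I p q = (I q p).map σ ⊔ lowPart I p q

variable (W : ℤ → Submodule ℂ V) (S : ℤ → V →ₗ[ℂ] V →ₗ[ℂ] ℂ)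

/-- The family of bilinear forms `S_k` represents graded bilinear forms on the
quotients `Gr^W_k = W_k/W_{k-1}`: each `S_k` kills `W_{k-1}` (so it descends to
`Gr^W_k`), is nondegenerate on `Gr^W_k`, and has parity `(-1)^k`. -/
def IsGradedForms : Prop :=
  (∀ k : ℤ, ∀ u v : V, u ∈ W (k - 1) → S k u v = 0) ∧
  (∀ k : ℤ, ∀ u v : V, v ∈ W (k - 1) → S k u v = 0) ∧
  (∀ k : ℤ, ∀ u ∈ W k, (∀ v ∈ W k, S k u v = 0) → u ∈ W (k - 1)) ∧
  ∀ k : ℤ, ∀ u v : V, S k u v = (-1 : ℂ) ^ k * S k v u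

/-- `z` is a positive real number (inside `ℂ`). -/
def IsPosReal (z : ℂ) : Prop := 0 < z.re ∧ z.im = 0

/-- `F` belongs to the classifying space `M` of graded-polarized mixed Hodge
structures: `(F, W)` is a mixed Hodge structure whose Deligne bigrading has prescribed
dimensions `h^{p,q}` and whose induced pure Hodge structure on each `Gr^W_k` is
polarized by `S_k` (first bilinear relation and positivity; the `(p, k-p)` Hodge piece
of `Gr^W_k` is represented by `grH σ F W k p ⊆ V`, and the class of `v` is nonzero
precisely when `v ∉ W_{k-1}`). -/
def memM (σ : V →ₛₗ[starRingEnd ℂ] V) (h : ℤ → ℤ → ℕ) (F : ℤ → Submodule ℂ V) : Prop :=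
  IsMHS σ F W ∧
  (∃ I : ℤ → ℤ → Submodule ℂ V, IsDeligne σ F W I ∧
      ∀ p q : ℤ, Module.finrank ℂ (I p q) = h p q) ∧
  (∀ k p : ℤ, ∀ u ∈ F p ⊓ W k, ∀ v ∈ F (k - p + 1) ⊓ W k, S k u v = 0) ∧
  ∀ k p : ℤ, ∀ v ∈ grH σ F W k p, v ∉ W (k - 1) →
    IsPosReal (Complex.I ^ (2 * p - k) * S k v (σ v))

/-- The subspace of `End(V)` of endomorphisms mapping `P` into `Q`. -/
def mapsInto (P Q : Submodule ℂ V) : Submodule ℂ (Module.End ℂ V) where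
  carrier := {α | ∀ v ∈ P, α v ∈ Q}
  add_mem' := by
    intro a b ha hb v hv
    have h : (a + b) v = a v + b v := rfl
    rw [h]
    exact Q.add_mem (ha v hv) (hb v hv)
  zero_mem' := by
    intro v hv
    show (0 : Module.End ℂ V) v ∈ Q
    simp
  smul_mem' := by
    intro c a ha v hv
    have h : (c • a) v = c • a v := rfl
    rw [h]
    exact Q.smul_mem c (ha v hv)

/-- Conjugation on `End(V)` induced by the conjugation `σ` of `V`:
`α ↦ σ ∘ α ∘ σ`. -/
def conjEnd (σ : V →ₛₗ[starRingEnd ℂ] V) (α : Module.End ℂ V) : Module.End ℂ V where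
  toFun v := σ (α (σ v))
  map_add' x y := by simp
  map_smul' c v := by simp [map_smulₛₗ]

/-- Conjugation on `End(V)` as an antilinear map. -/
def conjEndSL (σ : V →ₛₗ[starRingEnd ℂ] V) :
    Module.End ℂ V →ₛₗ[starRingEnd ℂ] Module.End ℂ V where
  toFun := conjEnd σ
  map_add' α β := by
    ext v
    simp [conjEnd]
  map_smul' c α := by
    ext v
    simp [conjEnd]

/-- `gl(V)^{r,s}` relative to a bigrading `I` of `V`: endomorphisms with
`α(I^{p,q}) ⊆ I^{p+r,q+s}` for all `p, q`. -/
def endShiftI (I : ℤ → ℤ → Submodule ℂ V) (r s : ℤ) : Submodule ℂ (Module.End ℂ V) :=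
  ⨅ pq : ℤ × ℤ, mapsInto (I pq.1 pq.2) (I (pq.1 + r) (pq.2 + s))

/-- The exponential of a (nilpotent) endomorphism of a finite-dimensional space,
as the truncated exponential series. -/
def expEnd [FiniteDimensional ℂ V] (α : Module.End ℂ V) : Module.End ℂ V :=
  ∑ i ∈ Finset.range (Module.finrank ℂ V + 1), ((i.factorial : ℂ)⁻¹) • α ^ i

/-- The bilinear-form part of `Lie(G_ℂ)`: endomorphisms acting on each `Gr^W_k` as
infinitesimal isometries of `S_k`. -/
def infinIsom : Submodule ℂ (Module.End ℂ V) where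
  carrier := {X | ∀ k : ℤ, ∀ u ∈ W k, ∀ v ∈ W k, S k (X u) v + S k u (X v) = 0}
  add_mem' := by
    intro X Y hX hY k u hu v hv
    have h1 := hX k u hu v hv
    have h2 := hY k u hu v hv
    have ha : (X + Y) u = X u + Y u := rfl
    have hb : (X + Y) v = X v + Y v := rfl
    rw [ha, hb, map_add, LinearMap.add_apply, map_add]
    linear_combination h1 + h2
  zero_mem' := by
    intro k u hu v hv
    show S k ((0 : Module.End ℂ V) u) v + S k u ((0 : Module.End ℂ V) v) = 0
    simp
  smul_mem' := by
    intro c X hX k u hu v hv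
    have h := hX k u hu v hv
    have ha : (c • X) u = c • X u := rfl
    have hb : (c • X) v = c • X v := rfl
    rw [ha, hb, map_smul, LinearMap.smul_apply, map_smul]
    simp only [smul_eq_mul]
    linear_combination c * h

/-- `Lie(G_ℂ)`: endomorphisms preserving `W` and acting on each `Gr^W_k` as
infinitesimal isometries of `S_k`. -/
def lieGC : Submodule ℂ (Module.End ℂ V) :=
  (⨅ k : ℤ, mapsInto (W k) (W k)) ⊓ infinIsom W S

/-- The bigraded piece `g^{r,s}` of `Lie(G_ℂ)` induced by the Deligne bigrading `I`. -/
def grs (I : ℤ → ℤ → Submodule ℂ V) (r s : ℤ) : Submodule ℂ (Module.End ℂ V) :=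
  lieGC W S ⊓ endShiftI I r s

/-- `Lie(G_ℂ^F)`-type condition: the subalgebra of endomorphisms preserving the
filtration `F`. -/
def stabF (F : ℤ → Submodule ℂ V) : Submodule ℂ (Module.End ℂ V) :=
  ⨅ p : ℤ, mapsInto (F p) (F p)

variable (I : ℤ → ℤ → Submodule ℂ V)

/-- `n_+ = ⊕_{r≥0, s<0} g^{r,s}`. -/
def nPlus : Submodule ℂ (Module.End ℂ V) :=
  ⨆ (rs : ℤ × ℤ) (_ : 0 ≤ rs.1 ∧ rs.2 < 0), grs W S I rs.1 rs.2

/-- `n_0 = g^{0,0}`. -/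
def nZero : Submodule ℂ (Module.End ℂ V) := grs W S I 0 0

/-- `n_- = ⊕_{r<0, s≥0} g^{r,s}`. -/
def nMinus : Submodule ℂ (Module.End ℂ V) :=
  ⨆ (rs : ℤ × ℤ) (_ : rs.1 < 0 ∧ 0 ≤ rs.2), grs W S I rs.1 rs.2

/-- `λ = ⊕_{r<0, s<0} g^{r,s}`. -/
def lam : Submodule ℂ (Module.End ℂ V) :=
  ⨆ (rs : ℤ × ℤ) (_ : rs.1 < 0 ∧ rs.2 < 0), grs W S I rs.1 rs.2

namespace S16

open DirectSum

section Proj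
variable {M : Type*} [AddCommGroup M] [Module ℂ M]
variable {ι : Type*} [DecidableEq ι] (P : ι → Submodule ℂ M)

def eqv (hP : DirectSum.IsInternal P) : (⨁ i, P i) ≃ₗ[ℂ] M :=
  LinearEquiv.ofBijective (DirectSum.coeLinearMap P) hP

def proj (hP : DirectSum.IsInternal P) (i : ι) : M →ₗ[ℂ] M :=
  (P i).subtype ∘ₗ (DirectSum.component ℂ ι _ i) ∘ₗ ((eqv P hP).symm : M →ₗ[ℂ] ⨁ i, P i)

lemma proj_apply (hP : DirectSum.IsInternal P) (i : ι) (v : M) :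
    proj P hP i v = ((eqv P hP).symm v i : M) := rfl

lemma proj_mem (hP : DirectSum.IsInternal P) (i : ι) (v : M) :
    proj P hP i v ∈ P i := ((eqv P hP).symm v i).2

lemma proj_self (hP : DirectSum.IsInternal P) {i : ι} {v : M} (hv : v ∈ P i) :
    proj P hP i v = v := by
  rw [proj_apply, eqv, hP.ofBijective_coeLinearMap_of_mem hv]

lemma proj_other (hP : DirectSum.IsInternal P) {i j : ι} {v : M} (hv : v ∈ P i) (hij : i ≠ j) :
    proj P hP j v = 0 := by
  rw [proj_apply, eqv, hP.ofBijective_coeLinearMap_of_mem_ne hij hv]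
  rfl

lemma ext_on (hP : DirectSum.IsInternal P) {W' : Type*} [AddCommGroup W'] [Module ℂ W']
    {φ ψ : M →ₗ[ℂ] W'} (h : ∀ i, ∀ v ∈ P i, φ v = ψ v) : φ = ψ := by
  have h2 : φ ∘ₗ ((eqv P hP : (⨁ i, P i) ≃ₗ[ℂ] M) : (⨁ i, P i) →ₗ[ℂ] M)
      = ψ ∘ₗ ((eqv P hP : (⨁ i, P i) ≃ₗ[ℂ] M) : (⨁ i, P i) →ₗ[ℂ] M) := by
    refine DirectSum.linearMap_ext _ fun i => ?_
    ext x
    have he : (eqv P hP) (DirectSum.lof ℂ ι (fun i => P i) i x) = (x : M) :=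
      DirectSum.coeLinearMap_of P i x
    simp only [LinearMap.comp_apply, LinearEquiv.coe_coe, he]
    exact h i x x.2
  ext v
  have := congrArg (fun f => f ((eqv P hP).symm v)) h2
  simpa using this

lemma biSup_induction {ι' : Type*} (P' : ι' → Submodule ℂ M) (c : ι' → Prop) {motive : M → Prop}
    {x : M} (hx : x ∈ ⨆ i, ⨆ (_ : c i), P' i) (mem : ∀ i, c i → ∀ y ∈ P' i, motive y)
    (zero : motive 0) (add : ∀ y z, motive y → motive z → motive (y + z)) : motive x := by
  rw [iSup_subtype'] at hx
  exact Submodule.iSup_induction (motive := motive) _ hx (fun i y hy => mem i.1 i.2 y hy) zero add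


variable [FiniteDimensional ℂ M]

open scoped Classical in
def suppT (hP : DirectSum.IsInternal P) : Finset ι :=
  (WellFoundedGT.finite_ne_bot_of_iSupIndep hP.submodule_iSupIndep).toFinset

lemma bot_of_not_mem_suppT (hP : DirectSum.IsInternal P) {i : ι} (hi : i ∉ suppT P hP) :
    P i = ⊥ := by
  classical
  by_contra h
  exact hi ((WellFoundedGT.finite_ne_bot_of_iSupIndep hP.submodule_iSupIndep).mem_toFinset.2 h)

lemma proj_zero_of_not_mem (hP : DirectSum.IsInternal P) {i : ι} (hi : i ∉ suppT P hP) (w : M) :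
    proj P hP i w = 0 := by
  have := proj_mem P hP i w
  rw [bot_of_not_mem_suppT P hP hi] at this
  simpa using this

lemma sum_proj (hP : DirectSum.IsInternal P) (w : M) :
    ∑ i ∈ suppT P hP, proj P hP i w = w := by
  classical
  set x := (eqv P hP).symm w with hx
  have hsupp : x.support ⊆ suppT P hP := by
    intro i hi
    rw [DFinsupp.mem_support_iff] at hi
    by_contra hns
    have hb := bot_of_not_mem_suppT P hP hns
    apply hi
    exact Subtype.ext ((Submodule.eq_bot_iff _).1 hb _ (x i).2)
  have hw : (eqv P hP) x = w := by rw [hx]; exact (eqv P hP).apply_symm_apply w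
  have hxs : (∑ i ∈ x.support, DirectSum.of (fun i => P i) i (x i)) = x :=
    DirectSum.sum_support_of x
  calc ∑ i ∈ suppT P hP, proj P hP i w
      = ∑ i ∈ suppT P hP, ((x i : M)) := by
        refine Finset.sum_congr rfl fun i _ => ?_
        rw [proj_apply, hx]
    _ = ∑ i ∈ x.support, ((x i : M)) := by
        refine (Finset.sum_subset hsupp ?_).symm
        intro i _ hni
        rw [DFinsupp.notMem_support_iff] at hni
        rw [hni]; rfl
    _ = w := by
        conv_rhs => rw [← hw, ← hxs]
        rw [map_sum]
        refine Finset.sum_congr rfl fun i _ => ?_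
        exact (DirectSum.coeLinearMap_of P i (x i)).symm

end Proj

end S16
namespace S16

variable {σ : V →ₛₗ[starRingEnd ℂ] V} {F : ℤ → Submodule ℂ V}

structure Setup (σ : V →ₛₗ[starRingEnd ℂ] V) (W : ℤ → Submodule ℂ V)
    (S : ℤ → V →ₗ[ℂ] V →ₗ[ℂ] ℂ) (F : ℤ → Submodule ℂ V) (I : ℤ → ℤ → Submodule ℂ V) :
    Prop where
  hInt : DirectSum.IsInternal (fun pq : ℤ × ℤ => I pq.1 pq.2)
  hFd : ∀ p : ℤ, F p = ⨆ (rs : ℤ × ℤ) (_ : p ≤ rs.1), I rs.1 rs.2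
  hWd : ∀ k : ℤ, W k = ⨆ (rs : ℤ × ℤ) (_ : rs.1 + rs.2 ≤ k), I rs.1 rs.2
  hDel : ∀ p q : ℤ, (I p q).map σ ≤ I q p ⊔ lowPart I q p
  hWm : Monotone W
  hFa : Antitone F
  hSl : ∀ k : ℤ, ∀ u v : V, u ∈ W (k - 1) → S k u v = 0
  hSr : ∀ k : ℤ, ∀ u v : V, v ∈ W (k - 1) → S k u v = 0
  hFrel : ∀ k p : ℤ, ∀ u ∈ F p ⊓ W k, ∀ v ∈ F (k - p + 1) ⊓ W k, S k u v = 0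
  hσW : ∀ k : ℤ, ∀ v ∈ W k, σ v ∈ W k
  hσσ : ∀ v : V, σ (σ v) = v
  hSconj : ∀ k : ℤ, ∀ u v : V, S k (σ u) (σ v) = (starRingEnd ℂ) (S k u v)

lemma piece_le (I : ℤ → ℤ → Submodule ℂ V) (c : ℤ × ℤ → Prop) {p q : ℤ} (h : c (p, q)) :
    I p q ≤ ⨆ (rs : ℤ × ℤ) (_ : c rs), I rs.1 rs.2 :=
  le_iSup_of_le (p, q) (le_iSup_of_le h le_rfl)

variable {W S I}

lemma Setup.I_le_W (hs : Setup σ W S F I) {p q k : ℤ} (h : p + q ≤ k) : I p q ≤ W k := by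
  rw [hs.hWd]; exact piece_le I _ h

lemma Setup.I_le_F (hs : Setup σ W S F I) {p q r : ℤ} (h : r ≤ p) : I p q ≤ F r := by
  rw [hs.hFd]; exact piece_le I _ h

lemma Setup.low_le_W (hs : Setup σ W S F I) {p q k : ℤ} (h : p + q - 2 ≤ k) :
    lowPart I p q ≤ W k := by
  refine iSup_le fun rs => iSup_le fun hrs => hs.I_le_W (by omega)

def Setup.prj (hs : Setup σ W S F I) (a b : ℤ) : V →ₗ[ℂ] V :=
  proj (fun pq : ℤ × ℤ => I pq.1 pq.2) hs.hInt (a, b)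

lemma Setup.prj_mem (hs : Setup σ W S F I) (a b : ℤ) (v : V) : hs.prj a b v ∈ I a b :=
  proj_mem _ hs.hInt (a, b) v

lemma Setup.prj_self (hs : Setup σ W S F I) {a b : ℤ} {v : V} (hv : v ∈ I a b) :
    hs.prj a b v = v :=
  proj_self _ hs.hInt (i := (a, b)) hv

lemma Setup.prj_other (hs : Setup σ W S F I) {a b c d : ℤ} {v : V} (hv : v ∈ I a b)
    (hne : (a, b) ≠ (c, d)) : hs.prj c d v = 0 :=
  proj_other _ hs.hInt (i := (a, b)) (j := (c, d)) hv hne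

lemma Setup.prj_biSup_zero (hs : Setup σ W S F I) (c : ℤ × ℤ → Prop) {a b : ℤ} {v : V}
    (hv : v ∈ ⨆ (rs : ℤ × ℤ) (_ : c rs), I rs.1 rs.2) (hc : ¬ c (a, b)) :
    hs.prj a b v = 0 := by
  refine biSup_induction (motive := fun y => hs.prj a b y = 0) _ c hv (fun i hi y hy => ?_)
    (map_zero _) (fun y z hy hz => by show hs.prj a b (y+z) = 0; rw [map_add, hy, hz, add_zero])
  exact hs.prj_other (a := i.1) (b := i.2) hy (fun h => hc (h ▸ hi))

lemma Setup.prj_W_zero (hs : Setup σ W S F I) {k a b : ℤ} {v : V} (hv : v ∈ W k)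
    (h : k < a + b) : hs.prj a b v = 0 := by
  rw [hs.hWd] at hv
  exact hs.prj_biSup_zero _ hv (by simp; omega)

lemma Setup.prj_F_zero (hs : Setup σ W S F I) {p a b : ℤ} {v : V} (hv : v ∈ F p)
    (h : a < p) : hs.prj a b v = 0 := by
  rw [hs.hFd] at hv
  exact hs.prj_biSup_zero _ hv (by simp; omega)

lemma Setup.extI (hs : Setup σ W S F I) {φ ψ : Module.End ℂ V}
    (h : ∀ p q : ℤ, ∀ v ∈ I p q, φ v = ψ v) : φ = ψ :=
  ext_on _ hs.hInt (fun pq v hv => h pq.1 pq.2 v hv)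

/-- Orthogonality of the pieces under `S k`. -/
lemma Setup.Sortho (hs : Setup σ W S F I) {k a b c d : ℤ} (hab : a + b ≤ k) (hcd : c + d ≤ k)
    {x y : V} (hx : x ∈ I a b) (hy : y ∈ I c d) (hne : a + c ≠ k ∨ b + d ≠ k) :
    S k x y = 0 := by
  rcases lt_or_eq_of_le hab with hab' | hab'
  · exact hs.hSl k x y (hs.I_le_W (by omega) hx)
  rcases lt_or_eq_of_le hcd with hcd' | hcd'
  · exact hs.hSr k x y (hs.I_le_W (by omega) hy)
  have hac : a + c ≠ k := by omega
  rcases lt_or_gt_of_ne hac with hlt | hgt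
  · -- a + c < k : use conjugation
    have hbd : k < b + d := by omega
    have hσx : σ x ∈ I b a ⊔ lowPart I b a := hs.hDel a b ⟨x, hx, rfl⟩
    have hσy : σ y ∈ I d c ⊔ lowPart I d c := hs.hDel c d ⟨y, hy, rfl⟩
    rcases Submodule.mem_sup.1 hσx with ⟨x₁, hx₁, x₂, hx₂, hxe⟩
    rcases Submodule.mem_sup.1 hσy with ⟨y₁, hy₁, y₂, hy₂, hye⟩
    have hx₂W : x₂ ∈ W (k - 1) := hs.low_le_W (by omega) hx₂
    have hy₂W : y₂ ∈ W (k - 1) := hs.low_le_W (by omega) hy₂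
    have h1 : S k x₁ y₁ = 0 := by
      refine hs.hFrel k b x₁ ⟨hs.I_le_F le_rfl hx₁, hs.I_le_W (by omega) hx₁⟩ y₁
        ⟨hs.hFa (by omega : k - b + 1 ≤ d) (hs.I_le_F le_rfl hy₁),
         hs.I_le_W (by omega) hy₁⟩
    have hconj : S k (σ x) (σ y) = 0 := by
      rw [← hxe, ← hye]
      simp only [map_add, LinearMap.add_apply]
      rw [h1, hs.hSr k x₁ y₂ hy₂W, hs.hSl k x₂ y₁ hx₂W, hs.hSr k x₂ y₂ hy₂W]
      ring
    have := hs.hSconj k x y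
    rw [hconj] at this
    exact (starRingEnd ℂ).injective (by simpa using this.symm)
  · -- k < a + c
    exact hs.hFrel k a x ⟨hs.I_le_F le_rfl hx, hs.I_le_W (by omega) hx⟩ y
      ⟨hs.hFa (by omega : k - a + 1 ≤ c) (hs.I_le_F le_rfl hy), hs.I_le_W (by omega) hy⟩

end S16
namespace S16
variable {σ : V →ₛₗ[starRingEnd ℂ] V} {F : ℤ → Submodule ℂ V} {W S I}

lemma mem_mapsInto {P Q : Submodule ℂ V} {X : Module.End ℂ V} :
    X ∈ mapsInto P Q ↔ ∀ v ∈ P, X v ∈ Q := Iff.rfl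

lemma mem_endShiftI {r s : ℤ} {X : Module.End ℂ V} :
    X ∈ endShiftI I r s ↔ ∀ p q : ℤ, ∀ v ∈ I p q, X v ∈ I (p + r) (q + s) := by
  rw [endShiftI, Submodule.mem_iInf]
  exact ⟨fun h p q => h (p, q), fun h pq => h pq.1 pq.2⟩

lemma mem_lieGC {X : Module.End ℂ V} :
    X ∈ lieGC W S ↔ (∀ k : ℤ, ∀ v ∈ W k, X v ∈ W k) ∧
      ∀ k : ℤ, ∀ u ∈ W k, ∀ v ∈ W k, S k (X u) v + S k u (X v) = 0 := by
  rw [lieGC, Submodule.mem_inf, Submodule.mem_iInf]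
  exact Iff.rfl

def Setup.cmp (hs : Setup σ W S F I) (X : Module.End ℂ V) (r s : ℤ) : Module.End ℂ V :=
  (DirectSum.toModule ℂ (ℤ × ℤ) V fun pq =>
      hs.prj (pq.1 + r) (pq.2 + s) ∘ₗ X ∘ₗ (I pq.1 pq.2).subtype) ∘ₗ
    ((eqv (fun pq : ℤ × ℤ => I pq.1 pq.2) hs.hInt).symm.toLinearMap)

lemma Setup.cmp_apply (hs : Setup σ W S F I) (X : Module.End ℂ V) (r s : ℤ) {p q : ℤ} {v : V}
    (hv : v ∈ I p q) : hs.cmp X r s v = hs.prj (p + r) (q + s) (X v) := by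
  have hsymm : (eqv _ hs.hInt).symm v
      = DirectSum.lof ℂ (ℤ × ℤ) (fun pq => (I pq.1 pq.2 : Submodule ℂ V)) (p, q) ⟨v, hv⟩ := by
    rw [LinearEquiv.symm_apply_eq]
    rw [DirectSum.lof_eq_of]
    exact (DirectSum.coeLinearMap_of _ (p, q) ⟨v, hv⟩).symm
  simp only [Setup.cmp, LinearMap.coe_comp, Function.comp_apply, LinearEquiv.coe_toLinearMap]
  rw [hsymm, DirectSum.toModule_lof]
  rfl

lemma Setup.cmp_zero (hs : Setup σ W S F I) (r s : ℤ) : hs.cmp 0 r s = 0 :=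
  hs.extI fun p q v hv => by
    rw [hs.cmp_apply 0 r s hv]
    simp only [LinearMap.zero_apply, map_zero]

lemma Setup.cmp_add (hs : Setup σ W S F I) (X Y : Module.End ℂ V) (r s : ℤ) :
    hs.cmp (X + Y) r s = hs.cmp X r s + hs.cmp Y r s :=
  hs.extI fun p q v hv => by
    rw [LinearMap.add_apply, hs.cmp_apply _ r s hv, hs.cmp_apply _ r s hv,
      hs.cmp_apply _ r s hv, LinearMap.add_apply, map_add]

lemma Setup.cmp_endShift (hs : Setup σ W S F I) (X : Module.End ℂ V) (r s : ℤ) :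
    hs.cmp X r s ∈ endShiftI I r s :=
  mem_endShiftI.2 fun p q v hv => by
    rw [hs.cmp_apply X r s hv]; exact hs.prj_mem _ _ _

lemma Setup.cmp_of_endShift_same (hs : Setup σ W S F I) {X : Module.End ℂ V} {r s : ℤ}
    (hX : X ∈ endShiftI I r s) : hs.cmp X r s = X :=
  hs.extI fun p q v hv => by
    rw [hs.cmp_apply X r s hv, hs.prj_self (mem_endShiftI.1 hX p q v hv)]

lemma Setup.cmp_of_endShift_ne (hs : Setup σ W S F I) {X : Module.End ℂ V} {r s a b : ℤ}
    (hX : X ∈ endShiftI I r s) (hne : (r, s) ≠ (a, b)) : hs.cmp X a b = 0 :=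
  hs.extI fun p q v hv => by
    rw [hs.cmp_apply X a b hv, LinearMap.zero_apply]
    refine hs.prj_other (mem_endShiftI.1 hX p q v hv) ?_
    intro hc
    apply hne
    rw [Prod.ext_iff] at hc ⊢
    constructor <;> omega

lemma Setup.cmp_W (hs : Setup σ W S F I) {X : Module.End ℂ V}
    (hXW : ∀ k : ℤ, ∀ v ∈ W k, X v ∈ W k) (r s : ℤ) (k : ℤ) :
    ∀ v ∈ W k, hs.cmp X r s v ∈ W k := by
  intro v hv
  rw [hs.hWd] at hv
  refine biSup_induction (motive := fun v => hs.cmp X r s v ∈ W k) _ _ hv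
    (fun pq hpq v₀ hv₀ => ?_)
    (by show hs.cmp X r s 0 ∈ W k; rw [map_zero]; exact zero_mem _)
    (fun y z hy hz => by show hs.cmp X r s (y + z) ∈ W k; rw [map_add]; exact add_mem hy hz)
  show hs.cmp X r s v₀ ∈ W k
  rw [hs.cmp_apply X r s hv₀]
  rcases le_or_gt (r + s) 0 with hrs | hrs
  · exact hs.I_le_W (by omega) (hs.prj_mem _ _ _)
  · rw [hs.prj_W_zero (hXW _ _ (hs.I_le_W le_rfl hv₀)) (by omega)]
    exact zero_mem _
end S16
namespace S16
variable {σ : V →ₛₗ[starRingEnd ℂ] V} {F : ℤ → Submodule ℂ V} {W S I}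
variable [FiniteDimensional ℂ V]

lemma Setup.cmp_isom_core (hs : Setup σ W S F I) {X : Module.End ℂ V}
    (hXW : ∀ k : ℤ, ∀ v ∈ W k, X v ∈ W k)
    (hXS : ∀ k : ℤ, ∀ u ∈ W k, ∀ v ∈ W k, S k (X u) v + S k u (X v) = 0)
    {r s k p q p' q' : ℤ} (hpq : p + q ≤ k) (hp'q' : p' + q' ≤ k) {u v : V}
    (hu : u ∈ I p q) (hv : v ∈ I p' q') :
    S k (hs.cmp X r s u) v + S k u (hs.cmp X r s v) = 0 := by
  have hXu : X u ∈ W (p + q) := hXW _ _ (hs.I_le_W le_rfl hu)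
  have hXv : X v ∈ W (p' + q') := hXW _ _ (hs.I_le_W le_rfl hv)
  rw [hs.cmp_apply X r s hu, hs.cmp_apply X r s hv]
  rcases lt_or_ge 0 (r + s) with hrs | hrs
  · rw [hs.prj_W_zero hXu (by omega), hs.prj_W_zero hXv (by omega)]
    simp
  by_cases h1 : p + p' + r = k ∧ q + q' + s = k
  · obtain ⟨h1a, h1b⟩ := h1
    have e1 : S k (X u) v = S k (hs.prj (p + r) (q + s) (X u)) v := by
      conv_lhs => rw [← sum_proj _ hs.hInt (X u)]
      rw [map_sum, LinearMap.sum_apply]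
      refine Finset.sum_eq_single ((p + r, q + s) : ℤ × ℤ) (fun cd hcd hne => ?_)
        (fun hns => ?_)
      · rcases lt_or_ge (p + q) (cd.1 + cd.2) with hgt | hle
        · rw [show proj (fun pq : ℤ × ℤ => I pq.1 pq.2) hs.hInt cd = hs.prj cd.1 cd.2 from rfl,
            hs.prj_W_zero hXu hgt]
          simp
        · refine hs.Sortho (by omega : cd.1 + cd.2 ≤ k) hp'q' (hs.prj_mem cd.1 cd.2 (X u)) hv ?_
          have hne2 : cd.1 ≠ p + r ∨ cd.2 ≠ q + s := by
            by_contra hc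
            push_neg at hc
            exact hne (Prod.ext hc.1 hc.2)
          omega
      · rw [proj_zero_of_not_mem _ hs.hInt hns]
        simp
    have e2 : S k u (X v) = S k u (hs.prj (p' + r) (q' + s) (X v)) := by
      conv_lhs => rw [← sum_proj _ hs.hInt (X v)]
      rw [map_sum]
      refine Finset.sum_eq_single ((p' + r, q' + s) : ℤ × ℤ) (fun cd hcd hne => ?_)
        (fun hns => ?_)
      · rcases lt_or_ge (p' + q') (cd.1 + cd.2) with hgt | hle
        · rw [show proj (fun pq : ℤ × ℤ => I pq.1 pq.2) hs.hInt cd = hs.prj cd.1 cd.2 from rfl,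
            hs.prj_W_zero hXv hgt]
          simp
        · refine hs.Sortho hpq (by omega : cd.1 + cd.2 ≤ k) hu (hs.prj_mem cd.1 cd.2 (X v)) ?_
          have hne2 : cd.1 ≠ p' + r ∨ cd.2 ≠ q' + s := by
            by_contra hc
            push_neg at hc
            exact hne (Prod.ext hc.1 hc.2)
          omega
      · rw [proj_zero_of_not_mem _ hs.hInt hns]
        simp
    rw [← e1, ← e2]
    exact hXS k u (hs.I_le_W hpq hu) v (hs.I_le_W hp'q' hv)
  · push_neg at h1
    have h1' : p + p' + r ≠ k ∨ q + q' + s ≠ k := by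
      by_cases ha : p + p' + r = k
      · exact Or.inr (h1 ha)
      · exact Or.inl ha
    rw [hs.Sortho (by omega : (p + r) + (q + s) ≤ k) hp'q' (hs.prj_mem _ _ (X u)) hv
        (by omega),
      hs.Sortho hpq (by omega : (p' + r) + (q' + s) ≤ k) hu (hs.prj_mem _ _ (X v))
        (by omega), add_zero]

lemma Setup.cmp_lieGC (hs : Setup σ W S F I) {X : Module.End ℂ V} (hX : X ∈ lieGC W S)
    (r s : ℤ) : hs.cmp X r s ∈ lieGC W S := by
  obtain ⟨hXW, hXS⟩ := mem_lieGC.1 hX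
  refine mem_lieGC.2 ⟨hs.cmp_W hXW r s, fun k u hu v hv => ?_⟩
  rw [hs.hWd] at hu hv
  refine biSup_induction
    (motive := fun u => S k (hs.cmp X r s u) v + S k u (hs.cmp X r s v) = 0) _ _ hu
    (fun pq hpq u₀ hu₀ => ?_)
    (by simp)
    (fun y z hy hz => by
      simp only [map_add, LinearMap.add_apply] at hy hz ⊢
      linear_combination hy + hz)
  refine biSup_induction
    (motive := fun v => S k (hs.cmp X r s u₀) v + S k u₀ (hs.cmp X r s v) = 0) _ _ hv
    (fun pq' hpq' v₀ hv₀ => ?_)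
    (by simp)
    (fun y z hy hz => by
      simp only [map_add, LinearMap.add_apply] at hy hz ⊢
      linear_combination hy + hz)
  exact hs.cmp_isom_core hXW hXS hpq hpq' hu₀ hv₀

def Setup.Tsh (hs : Setup σ W S F I) : Finset (ℤ × ℤ) :=
  ((suppT _ hs.hInt) ×ˢ (suppT _ hs.hInt)).image fun ab => ab.2 - ab.1

lemma Setup.cmp_sum (hs : Setup σ W S F I) (X : Module.End ℂ V) :
    ∑ rs ∈ hs.Tsh, hs.cmp X rs.1 rs.2 = X := by
  refine hs.extI fun p q v hv => ?_
  rw [LinearMap.sum_apply]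
  by_cases hmem : ((p, q) : ℤ × ℤ) ∈ suppT (fun pq : ℤ × ℤ => I pq.1 pq.2) hs.hInt
  · have step1 : ∀ rs ∈ hs.Tsh, hs.cmp X rs.1 rs.2 v
        = proj (fun pq : ℤ × ℤ => I pq.1 pq.2) hs.hInt ((p, q) + rs) (X v) := by
      intro rs _
      rw [hs.cmp_apply X rs.1 rs.2 hv]
      rfl
    rw [Finset.sum_congr rfl step1]
    have hinj : Function.Injective (fun rs : ℤ × ℤ => (p, q) + rs) := fun a b h => by
      simpa using h
    rw [← Finset.sum_image (g := fun rs : ℤ × ℤ => (p, q) + rs)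
      (f := fun cd => proj (fun pq : ℤ × ℤ => I pq.1 pq.2) hs.hInt cd (X v))
      (fun x _ y _ h => hinj h)]
    have hsub : suppT (fun pq : ℤ × ℤ => I pq.1 pq.2) hs.hInt
        ⊆ hs.Tsh.image fun rs => (p, q) + rs := by
      intro cd hcd
      refine Finset.mem_image.2 ⟨cd - (p, q), ?_, by abel⟩
      exact Finset.mem_image.2 ⟨((p, q), cd), Finset.mem_product.2 ⟨hmem, hcd⟩, rfl⟩
    rw [← Finset.sum_subset hsub (fun cd _ hcd => by
      rw [proj_zero_of_not_mem _ hs.hInt hcd])]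
    exact sum_proj _ hs.hInt (X v)
  · have hbot := bot_of_not_mem_suppT _ hs.hInt hmem
    have hv0 : v = 0 := by
      have : v ∈ (⊥ : Submodule ℂ V) := hbot ▸ hv
      simpa using this
    subst hv0
    simp
end S16
namespace S16
variable {σ : V →ₛₗ[starRingEnd ℂ] V} {F : ℤ → Submodule ℂ V} {W S I}

/-- Region supremum. -/
def regSup (W : ℤ → Submodule ℂ V) (S : ℤ → V →ₗ[ℂ] V →ₗ[ℂ] ℂ) (I : ℤ → ℤ → Submodule ℂ V)
    (A : ℤ × ℤ → Prop) : Submodule ℂ (Module.End ℂ V) :=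
  ⨆ (rs : ℤ × ℤ) (_ : A rs), grs W S I rs.1 rs.2

lemma regSup_le_lieGC (A : ℤ × ℤ → Prop) : regSup W S I A ≤ lieGC W S :=
  iSup_le fun _ => iSup_le fun _ => inf_le_left

lemma grs_le_regSup (A : ℤ × ℤ → Prop) {r s : ℤ} (h : A (r, s)) :
    grs W S I r s ≤ regSup W S I A :=
  le_iSup_of_le (r, s) (le_iSup_of_le h le_rfl)

lemma regSup_le {N : Submodule ℂ (Module.End ℂ V)} {A : ℤ × ℤ → Prop}
    (h : ∀ r s : ℤ, A (r, s) → grs W S I r s ≤ N) : regSup W S I A ≤ N :=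
  iSup_le fun rs => iSup_le fun hrs => h rs.1 rs.2 hrs

variable [FiniteDimensional ℂ V]

lemma Setup.cmp_regSup_zero (hs : Setup σ W S F I) {A : ℤ × ℤ → Prop} {X : Module.End ℂ V}
    (hX : X ∈ regSup W S I A) {a b : ℤ} (hab : ¬ A (a, b)) : hs.cmp X a b = 0 := by
  refine biSup_induction (motive := fun X => hs.cmp X a b = 0) _ _ hX
    (fun rs hrs Y hY => ?_)
    (hs.cmp_zero a b)
    (fun Y Z hY hZ => by
      show hs.cmp (Y + Z) a b = 0
      rw [hs.cmp_add, hY, hZ, add_zero])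
  refine hs.cmp_of_endShift_ne (Submodule.mem_inf.1 hY).2 fun hc => hab ?_
  have : rs = (a, b) := by rwa [← Prod.mk.eta (p := rs)]
  exact this ▸ hrs

lemma Setup.grs_bot (hs : Setup σ W S F I) {r s : ℤ} (h : 0 < r + s) :
    grs W S I r s = ⊥ := by
  refine (Submodule.eq_bot_iff _).2 fun X hX => ?_
  obtain ⟨hXg, hXe⟩ := Submodule.mem_inf.1 hX
  obtain ⟨hXW, -⟩ := mem_lieGC.1 hXg
  refine hs.extI fun p q v hv => ?_
  have h1 : X v ∈ I (p + r) (q + s) := mem_endShiftI.1 hXe p q v hv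
  have h2 : X v ∈ W (p + q) := hXW _ _ (hs.I_le_W le_rfl hv)
  rw [LinearMap.zero_apply, ← hs.prj_self h1, hs.prj_W_zero h2 (by omega)]

lemma Setup.cmp_grs (hs : Setup σ W S F I) {X : Module.End ℂ V} (hX : X ∈ lieGC W S)
    (r s : ℤ) : hs.cmp X r s ∈ grs W S I r s :=
  Submodule.mem_inf.2 ⟨hs.cmp_lieGC hX r s, hs.cmp_endShift X r s⟩

lemma Setup.mem_of_cmp (hs : Setup σ W S F I) {X : Module.End ℂ V} (hX : X ∈ lieGC W S)
    {N : Submodule ℂ (Module.End ℂ V)} (h : ∀ r s : ℤ, r + s ≤ 0 → hs.cmp X r s ∈ N) :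
    X ∈ N := by
  rw [← hs.cmp_sum X]
  refine Submodule.sum_mem _ fun rs _ => ?_
  rcases le_or_gt (rs.1 + rs.2) 0 with hle | hgt
  · exact h rs.1 rs.2 hle
  · have h1 := hs.cmp_grs hX rs.1 rs.2
    rw [hs.grs_bot hgt, Submodule.mem_bot] at h1
    rw [h1]
    exact zero_mem _

lemma Setup.disjoint_regions (hs : Setup σ W S F I) {A B : ℤ × ℤ → Prop}
    (hAB : ∀ rs : ℤ × ℤ, ¬ A rs ∨ ¬ B rs) :
    regSup W S I A ⊓ regSup W S I B = ⊥ := by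
  refine (Submodule.eq_bot_iff _).2 fun X hX => ?_
  obtain ⟨hXA, hXB⟩ := Submodule.mem_inf.1 hX
  rw [← hs.cmp_sum X]
  refine Finset.sum_eq_zero fun rs _ => ?_
  rcases hAB rs with h | h
  · exact hs.cmp_regSup_zero hXA h
  · exact hs.cmp_regSup_zero hXB h

lemma Setup.endShift_stabF (hs : Setup σ W S F I) {X : Module.End ℂ V} {r s : ℤ}
    (hr : 0 ≤ r) (hX : X ∈ endShiftI I r s) : X ∈ stabF F := by
  rw [stabF, Submodule.mem_iInf]
  intro p v hv
  rw [hs.hFd] at hv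
  refine biSup_induction (motive := fun v => X v ∈ F p) _ _ hv (fun rs hrs v₀ hv₀ => ?_)
    (by show X 0 ∈ F p; rw [map_zero]; exact zero_mem _)
    (fun y z hy hz => by show X (y + z) ∈ F p; rw [map_add]; exact add_mem hy hz)
  exact hs.I_le_F (by omega) (mem_endShiftI.1 hX rs.1 rs.2 v₀ hv₀)

lemma Setup.cmp_stab_zero (hs : Setup σ W S F I) {X : Module.End ℂ V} (hXF : X ∈ stabF F)
    {r s : ℤ} (hr : r < 0) : hs.cmp X r s = 0 := by
  refine hs.extI fun p q v hv => ?_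
  rw [hs.cmp_apply X r s hv, LinearMap.zero_apply]
  have h1 : X v ∈ F p := by
    rw [stabF, Submodule.mem_iInf] at hXF
    exact hXF p v (hs.I_le_F le_rfl hv)
  exact hs.prj_F_zero h1 (by omega)

end S16
namespace S16
variable {σ : V →ₛₗ[starRingEnd ℂ] V} {F : ℤ → Submodule ℂ V} {W S I}

lemma conjEnd_apply (σ : V →ₛₗ[starRingEnd ℂ] V) (X : Module.End ℂ V) (v : V) :
    conjEnd σ X v = σ (X (σ v)) := rfl

lemma conjEnd_add (σ : V →ₛₗ[starRingEnd ℂ] V) (X Y : Module.End ℂ V) :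
    conjEnd σ (X + Y) = conjEnd σ X + conjEnd σ Y := by
  ext v
  simp [conjEnd_apply, map_add]

lemma conjEnd_zero (σ : V →ₛₗ[starRingEnd ℂ] V) : conjEnd σ (0 : Module.End ℂ V) = 0 := by
  ext v
  simp [conjEnd_apply]

lemma Setup.conjEnd_conjEnd (hs : Setup σ W S F I) (X : Module.End ℂ V) :
    conjEnd σ (conjEnd σ X) = X := by
  ext v
  simp only [conjEnd_apply, hs.hσσ]

lemma Setup.conj_lieGC (hs : Setup σ W S F I) {X : Module.End ℂ V} (hX : X ∈ lieGC W S) :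
    conjEnd σ X ∈ lieGC W S := by
  obtain ⟨hW', hS'⟩ := mem_lieGC.1 hX
  refine mem_lieGC.2 ⟨fun k v hv => hs.hσW k _ (hW' k _ (hs.hσW k v hv)), fun k u hu v hv => ?_⟩
  rw [conjEnd_apply, conjEnd_apply]
  calc S k (σ (X (σ u))) v + S k u (σ (X (σ v)))
      = S k (σ (X (σ u))) (σ (σ v)) + S k (σ (σ u)) (σ (X (σ v))) := by rw [hs.hσσ, hs.hσσ]
    _ = (starRingEnd ℂ) (S k (X (σ u)) (σ v)) + (starRingEnd ℂ) (S k (σ u) (X (σ v))) := by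
        rw [hs.hSconj, hs.hSconj]
    _ = (starRingEnd ℂ) (S k (X (σ u)) (σ v) + S k (σ u) (X (σ v))) := (map_add _ _ _).symm
    _ = 0 := by rw [hS' k _ (hs.hσW k u hu) _ (hs.hσW k v hv), map_zero]

lemma I_le_lowPart {a b a' b' : ℤ} (h1 : a < a') (h2 : b < b') :
    I a b ≤ lowPart I a' b' :=
  piece_le I _ ⟨h1, h2⟩

lemma lowPart_le_lowPart {a b a' b' : ℤ} (h1 : a ≤ a') (h2 : b ≤ b') :
    lowPart I a b ≤ lowPart I a' b' :=
  iSup_le fun rs => iSup_le fun hrs => I_le_lowPart (by omega) (by omega)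

lemma Setup.σ_lowPart (hs : Setup σ W S F I) {a b : ℤ} {z : V} (hz : z ∈ lowPart I a b) :
    σ z ∈ lowPart I b a := by
  refine biSup_induction (motive := fun z => σ z ∈ lowPart I b a) _ _ hz
    (fun rs hrs w hw => ?_) (by show σ 0 ∈ _; rw [map_zero]; exact zero_mem _)
    (fun y z hy hz => by show σ (y + z) ∈ _; rw [map_add]; exact add_mem hy hz)
  have h1 : σ w ∈ I rs.2 rs.1 ⊔ lowPart I rs.2 rs.1 := hs.hDel rs.1 rs.2 ⟨w, hw, rfl⟩
  refine (sup_le (I_le_lowPart hrs.2 hrs.1) (lowPart_le_lowPart (by omega) (by omega)) :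
    I rs.2 rs.1 ⊔ lowPart I rs.2 rs.1 ≤ lowPart I b a) h1

lemma Setup.conj_shift (hs : Setup σ W S F I) {X : Module.End ℂ V} {r s : ℤ}
    (hX : X ∈ endShiftI I r s) {p q : ℤ} {v : V} (hv : v ∈ I p q) :
    conjEnd σ X v ∈ I (p + s) (q + r) ⊔ lowPart I (p + s) (q + r) := by
  have h1 : σ v ∈ I q p ⊔ lowPart I q p := hs.hDel p q ⟨v, hv, rfl⟩
  rcases Submodule.mem_sup.1 h1 with ⟨y, hy, z, hz, hyz⟩
  have hXy : X y ∈ I (q + r) (p + s) := mem_endShiftI.1 hX q p y hy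
  have hXz : X z ∈ lowPart I (q + r) (p + s) := by
    refine biSup_induction (motive := fun z => X z ∈ lowPart I (q + r) (p + s)) _ _ hz
      (fun rs hrs w hw => ?_)
      (by show X 0 ∈ _; rw [map_zero]; exact zero_mem _)
      (fun y' z' hy' hz' => by show X (y' + z') ∈ _; rw [map_add]; exact add_mem hy' hz')
    exact I_le_lowPart (by omega) (by omega) (mem_endShiftI.1 hX rs.1 rs.2 w hw)
  have e : conjEnd σ X v = σ (X y) + σ (X z) := by
    rw [conjEnd_apply, ← hyz, map_add, map_add]
  have hσXy : σ (X y) ∈ I (p + s) (q + r) ⊔ lowPart I (p + s) (q + r) :=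
    hs.hDel (q + r) (p + s) ⟨X y, hXy, rfl⟩
  have hσXz : σ (X z) ∈ lowPart I (p + s) (q + r) := hs.σ_lowPart hXz
  rw [e]
  exact add_mem hσXy (Submodule.mem_sup_right hσXz)

lemma Setup.conj_cmp_zero (hs : Setup σ W S F I) {X : Module.End ℂ V} {r s : ℤ}
    (hX : X ∈ endShiftI I r s) {a b : ℤ} (h1 : ¬((a, b) = ((s, r) : ℤ × ℤ)))
    (h2 : ¬(a < s ∧ b < r)) : hs.cmp (conjEnd σ X) a b = 0 := by
  refine hs.extI fun p q v hv => ?_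
  rw [hs.cmp_apply _ a b hv, LinearMap.zero_apply]
  rcases Submodule.mem_sup.1 (hs.conj_shift hX hv) with ⟨y, hy, z, hz, hyz⟩
  rw [← hyz, map_add, hs.prj_other hy ?hne, hs.prj_biSup_zero _ hz ?hc, add_zero]
  case hne =>
    intro hc
    rw [Prod.ext_iff] at hc
    apply h1
    rw [Prod.ext_iff]
    simp only at hc ⊢
    omega
  case hc =>
    simp only [not_and]
    intro hc1 hc2
    exact h2 ⟨by omega, by omega⟩

end S16
namespace S16
variable {σ : V →ₛₗ[starRingEnd ℂ] V} {F : ℤ → Submodule ℂ V} {W S I}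
variable [FiniteDimensional ℂ V]

lemma Setup.region_conj (hs : Setup σ W S F I) {A B : ℤ × ℤ → Prop}
    (hB : ∀ r s : ℤ, A (r, s) → (B (s, r) ∧ ∀ a b : ℤ, a < s → b < r → B (a, b)))
    {X : Module.End ℂ V} (hX : X ∈ regSup W S I A) : conjEnd σ X ∈ regSup W S I B := by
  refine biSup_induction (motive := fun X => conjEnd σ X ∈ regSup W S I B) _ _ hX
    (fun rs hrs Y hY => ?_)
    (by show conjEnd σ 0 ∈ _; rw [conjEnd_zero]; exact zero_mem _)
    (fun Y Z hY hZ => by show conjEnd σ (Y + Z) ∈ _; rw [conjEnd_add]; exact add_mem hY hZ)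
  obtain ⟨hYg, hYe⟩ := Submodule.mem_inf.1 hY
  have hconjg : conjEnd σ Y ∈ lieGC W S := hs.conj_lieGC hYg
  refine hs.mem_of_cmp hconjg fun a b _ => ?_
  by_cases hc : (a, b) = ((rs.2, rs.1) : ℤ × ℤ) ∨ (a < rs.2 ∧ b < rs.1)
  · refine grs_le_regSup B ?_ (hs.cmp_grs hconjg a b)
    obtain ⟨h1, h2⟩ := hB rs.1 rs.2 (by rwa [Prod.mk.eta])
    rcases hc with hc | hc
    · rw [Prod.ext_iff] at hc
      simp only at hc
      rw [hc.1, hc.2]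
      exact h1
    · exact h2 a b hc.1 hc.2
  · rw [not_or] at hc
    rw [hs.conj_cmp_zero hYe hc.1 hc.2]
    exact zero_mem _

omit [FiniteDimensional ℂ V] in
lemma Sconj_of_rat {s : Set V} (hfixs : ∀ x ∈ s, σ x = x)
    (hrat : ∀ k : ℤ, ∀ u ∈ s, ∀ v ∈ s, ∃ q : ℚ, S k u v = (q : ℂ))
    (htop : Submodule.span ℂ s = ⊤) (k : ℤ) (u v : V) :
    S k (σ u) (σ v) = (starRingEnd ℂ) (S k u v) := by
  have hu : u ∈ Submodule.span ℂ s := htop ▸ Submodule.mem_top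
  have hv : v ∈ Submodule.span ℂ s := htop ▸ Submodule.mem_top
  refine Submodule.span_induction₂
    (p := fun u v _ _ => S k (σ u) (σ v) = (starRingEnd ℂ) (S k u v))
    ?_ ?_ ?_ ?_ ?_ ?_ ?_ hu hv
  · intro x y hx hy
    rw [hfixs x hx, hfixs y hy]
    obtain ⟨q, hq⟩ := hrat k x hx y hy
    rw [hq, map_ratCast]
  · intro y hy
    simp
  · intro x hx
    simp
  · intro x y z hx hy hz h1 h2
    simp only [map_add, LinearMap.add_apply] at h1 h2 ⊢
    rw [h1, h2]
  · intro x y z hx hy hz h1 h2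
    simp only [map_add] at h1 h2 ⊢
    rw [h1, h2]
  · intro c x y hx hy h1
    simp only [LinearMap.map_smulₛₗ, LinearMap.smul_apply, map_smul, smul_eq_mul,
      starRingEnd_apply, star_mul', RingHom.coe_coe] at h1 ⊢
    rw [h1]
  · intro c x y hx hy h1
    simp only [LinearMap.map_smulₛₗ, LinearMap.smul_apply, map_smul, smul_eq_mul,
      starRingEnd_apply, star_mul', RingHom.coe_coe] at h1 ⊢
    rw [h1]

end S16
namespace S16
variable {σ : V →ₛₗ[starRingEnd ℂ] V} {F : ℤ → Submodule ℂ V} {W S I}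

lemma mkSetup [Module ℚ V] [IsScalarTower ℚ ℂ V]
    (hσ : ∀ v, σ (σ v) = v) (VQ : Submodule ℚ V)
    (hQform : ∃ s : Set V, Submodule.span ℚ s = VQ ∧ LinearIndependent ℂ ((↑) : s → V) ∧
      Submodule.span ℂ s = ⊤)
    (hfix : ∀ v ∈ VQ, σ v = v)
    (hWfilt : IsIncFilt W)
    (hS : IsGradedForms W S)
    (hSrat : ∀ k : ℤ, ∀ u ∈ VQ, ∀ v ∈ VQ, ∃ q : ℚ, S k u v = (q : ℂ))
    (h : ℤ → ℤ → ℕ) (hF : memM W S σ h F) (hI : IsDeligne σ F W I) :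
    Setup σ W S F I := by
  obtain ⟨sQ, hspan, -, htop⟩ := hQform
  have hsVQ : ∀ x ∈ sQ, x ∈ VQ := fun x hx => hspan ▸ Submodule.subset_span hx
  exact {
    hInt := hI.1.1
    hFd := hI.1.2.1
    hWd := hI.1.2.2
    hDel := fun p q => le_trans le_sup_left (le_of_eq (hI.2 q p).symm)
    hWm := monotone_int_of_le_succ hWfilt.1
    hFa := antitone_int_of_succ_le hF.1.1.1
    hSl := hS.1
    hSr := hS.2.1
    hFrel := hF.2.2.1
    hσW := fun k v hv => by
      rw [← hF.1.2.2.1 k]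
      exact ⟨v, hv, rfl⟩
    hσσ := hσ
    hSconj := Sconj_of_rat (fun x hx => hfix x (hsVQ x hx))
      (fun k u hu v hv => hSrat k u (hsVQ u hu) v (hsVQ v hv)) htop }

end S16

/-- For `F ∈ M`: (i) `Lie(G_ℂ) = n_+ ⊕ n_0 ⊕ n_- ⊕ λ`;
(ii) `q_F = n_- ⊕ λ` and `Lie(G_ℂ^F) = n_+ ⊕ n_0`; (iii) `conj(n_+) ⊆ n_- ⊕ λ`,
`conj(n_0) ⊆ n_0 ⊕ λ`, `conj(n_-) ⊆ n_+ ⊕ λ` and `conj(λ) = λ`. -/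
theorem stmt_16 [FiniteDimensional ℂ V] [Module ℚ V] [IsScalarTower ℚ ℂ V]
    (σ : V →ₛₗ[starRingEnd ℂ] V) (hσ : ∀ v, σ (σ v) = v)
    (VQ : Submodule ℚ V)
    (hQform : ∃ s : Set V, span ℚ s = VQ ∧ LinearIndependent ℂ ((↑) : s → V) ∧
      span ℂ s = ⊤)
    (hfix : ∀ v ∈ VQ, σ v = v)
    (hWfilt : IsIncFilt W)
    (hWQ : ∀ k : ℤ, W k = span ℂ ((W k : Set V) ∩ (VQ : Set V)))
    (hS : IsGradedForms W S)
    (hSrat : ∀ k : ℤ, ∀ u ∈ VQ, ∀ v ∈ VQ, ∃ q : ℚ, S k u v = (q : ℂ))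
    (h : ℤ → ℤ → ℕ)
    (F : ℤ → Submodule ℂ V) (hF : memM W S σ h F)
    (hI : IsDeligne σ F W I) :
    (nPlus W S I ⊔ nZero W S I ⊔ nMinus W S I ⊔ lam W S I = lieGC W S ∧
      nPlus W S I ⊓ (nZero W S I ⊔ nMinus W S I ⊔ lam W S I) = ⊥ ∧
      nZero W S I ⊓ (nMinus W S I ⊔ lam W S I) = ⊥ ∧
      nMinus W S I ⊓ lam W S I = ⊥) ∧
    ((⨆ (rs : ℤ × ℤ) (_ : rs.1 < 0 ∧ rs.1 + rs.2 ≤ 0), grs W S I rs.1 rs.2) =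
        nMinus W S I ⊔ lam W S I ∧
      lieGC W S ⊓ stabF F = nPlus W S I ⊔ nZero W S I) ∧
    ((∀ X ∈ nPlus W S I, conjEnd σ X ∈ nMinus W S I ⊔ lam W S I) ∧
      (∀ X ∈ nZero W S I, conjEnd σ X ∈ nZero W S I ⊔ lam W S I) ∧
      (∀ X ∈ nMinus W S I, conjEnd σ X ∈ nPlus W S I ⊔ lam W S I) ∧
      conjEnd σ '' (lam W S I : Set (Module.End ℂ V)) =
        (lam W S I : Set (Module.End ℂ V))) := by
  have hs : S16.Setup σ W S F I := S16.mkSetup hσ VQ hQform hfix hWfilt hS hSrat h hF hI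
  have ePlus : nPlus W S I = S16.regSup W S I (fun rs => 0 ≤ rs.1 ∧ rs.2 < 0) := rfl
  have eMinus : nMinus W S I = S16.regSup W S I (fun rs => rs.1 < 0 ∧ 0 ≤ rs.2) := rfl
  have eLam : lam W S I = S16.regSup W S I (fun rs => rs.1 < 0 ∧ rs.2 < 0) := rfl
  have eZero : nZero W S I ≤ S16.regSup W S I (fun rs => rs = ((0, 0) : ℤ × ℤ)) :=
    S16.grs_le_regSup _ rfl
  refine ⟨⟨?_, ?_, ?_, ?_⟩, ⟨?_, ?_⟩, ?_, ?_, ?_, ?_⟩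
  · -- (i) sum = lieGC
    refine le_antisymm (sup_le (sup_le (sup_le ?_ ?_) ?_) ?_) ?_
    · exact S16.regSup_le_lieGC _
    · exact inf_le_left
    · exact S16.regSup_le_lieGC _
    · exact S16.regSup_le_lieGC _
    · intro X hX
      refine hs.mem_of_cmp hX fun r s hrs => ?_
      have hg := hs.cmp_grs hX r s
      by_cases h1 : 0 ≤ r
      · by_cases h2 : s < 0
        · exact (le_sup_of_le_left (le_sup_of_le_left (le_sup_of_le_left
            (S16.grs_le_regSup _ ⟨h1, h2⟩))) :
              grs W S I r s ≤ nPlus W S I ⊔ nZero W S I ⊔ nMinus W S I ⊔ lam W S I) hg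
        · obtain rfl : r = 0 := by omega
          obtain rfl : s = 0 := by omega
          have hle : nZero W S I ≤ nPlus W S I ⊔ nZero W S I ⊔ nMinus W S I ⊔ lam W S I :=
            le_sup_of_le_left (le_sup_of_le_left le_sup_right)
          exact hle hg
      · by_cases h2 : 0 ≤ s
        · exact (le_sup_of_le_left (le_sup_of_le_right
            (S16.grs_le_regSup _ ⟨by omega, h2⟩)) :
              grs W S I r s ≤ nPlus W S I ⊔ nZero W S I ⊔ nMinus W S I ⊔ lam W S I) hg
        · exact (le_sup_of_le_right (S16.grs_le_regSup _ ⟨by omega, by omega⟩) :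
              grs W S I r s ≤ nPlus W S I ⊔ nZero W S I ⊔ nMinus W S I ⊔ lam W S I) hg
  · -- nPlus disjoint rest
    have hB : nZero W S I ⊔ nMinus W S I ⊔ lam W S I ≤ S16.regSup W S I
        (fun rs => rs = ((0, 0) : ℤ × ℤ) ∨ (rs.1 < 0 ∧ 0 ≤ rs.2) ∨ (rs.1 < 0 ∧ rs.2 < 0)) := by
      refine sup_le (sup_le ?_ ?_) ?_
      · exact S16.grs_le_regSup _ (Or.inl rfl)
      · exact S16.regSup_le fun r s hsr => S16.grs_le_regSup _ (Or.inr (Or.inl hsr))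
      · exact S16.regSup_le fun r s hsr => S16.grs_le_regSup _ (Or.inr (Or.inr hsr))
    refine le_antisymm (le_trans (inf_le_inf_left _ hB)
      (le_of_eq (hs.disjoint_regions fun rs => ?_))) bot_le
    by_cases hA : 0 ≤ rs.1 ∧ rs.2 < 0
    · refine Or.inr ?_
      rintro (heq | hb | hb)
      · rw [Prod.ext_iff] at heq
        simp only at heq
        omega
      · omega
      · omega
    · exact Or.inl hA
  · -- nZero disjoint rest
    have hB : nMinus W S I ⊔ lam W S I ≤ S16.regSup W S I
        (fun rs => (rs.1 < 0 ∧ 0 ≤ rs.2) ∨ (rs.1 < 0 ∧ rs.2 < 0)) := by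
      refine sup_le ?_ ?_
      · exact S16.regSup_le fun r s hsr => S16.grs_le_regSup _ (Or.inl hsr)
      · exact S16.regSup_le fun r s hsr => S16.grs_le_regSup _ (Or.inr hsr)
    refine le_antisymm (le_trans (inf_le_inf eZero hB)
      (le_of_eq (hs.disjoint_regions fun rs => ?_))) bot_le
    by_cases hA : rs = ((0, 0) : ℤ × ℤ)
    · refine Or.inr ?_
      rw [Prod.ext_iff] at hA
      simp only at hA
      rintro (hb | hb) <;> omega
    · exact Or.inl hA
  · -- nMinus disjoint lam
    refine le_antisymm (le_trans (le_of_eq rfl)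
      (le_of_eq (hs.disjoint_regions (A := fun rs => rs.1 < 0 ∧ 0 ≤ rs.2)
        (B := fun rs => rs.1 < 0 ∧ rs.2 < 0) fun rs => ?_))) bot_le
    by_cases h2 : 0 ≤ rs.2
    · exact Or.inr fun hc => by omega
    · exact Or.inl fun hc => by omega
  · -- q_F = nMinus ⊔ lam
    refine le_antisymm (S16.regSup_le fun r s hrs => ?_)
      (sup_le (S16.regSup_le fun r s hrs => ?_) (S16.regSup_le fun r s hrs => ?_))
    · by_cases h2 : 0 ≤ s
      · exact le_sup_of_le_left (S16.grs_le_regSup _ ⟨hrs.1, h2⟩)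
      · exact le_sup_of_le_right (S16.grs_le_regSup _ ⟨hrs.1, by omega⟩)
    · by_cases h2 : r + s ≤ 0
      · exact S16.grs_le_regSup _ ⟨hrs.1, h2⟩
      · rw [hs.grs_bot (by omega)]
        exact bot_le
    · exact S16.grs_le_regSup _ ⟨hrs.1, by omega⟩
  · -- lieGC ⊓ stabF = nPlus ⊔ nZero
    refine le_antisymm ?_ (sup_le (le_inf (S16.regSup_le_lieGC _)
      (S16.regSup_le fun r s hrs => ?_)) (le_inf inf_le_left ?_))
    · intro X hX
      obtain ⟨hXg, hXF⟩ := Submodule.mem_inf.1 hX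
      refine hs.mem_of_cmp hXg fun r s hrs => ?_
      by_cases h1 : r < 0
      · rw [hs.cmp_stab_zero hXF h1]
        exact zero_mem _
      · have hg := hs.cmp_grs hXg r s
        by_cases h2 : s < 0
        · exact (le_sup_of_le_left (S16.grs_le_regSup _ ⟨by omega, h2⟩) :
              grs W S I r s ≤ nPlus W S I ⊔ nZero W S I) hg
        · obtain rfl : r = 0 := by omega
          obtain rfl : s = 0 := by omega
          have hle : nZero W S I ≤ nPlus W S I ⊔ nZero W S I := le_sup_right
          exact hle hg
    · intro X hX
      exact hs.endShift_stabF hrs.1 (Submodule.mem_inf.1 hX).2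
    · intro X hX
      exact hs.endShift_stabF le_rfl (Submodule.mem_inf.1 hX).2
  · -- conj nPlus
    intro X hX
    have hX' : X ∈ S16.regSup W S I (fun rs => 0 ≤ rs.1 ∧ rs.2 < 0) := ePlus ▸ hX
    have hc := hs.region_conj (B := fun rs => rs.1 < 0)
      (fun r s hA => ⟨hA.2, fun a b ha hb => by omega⟩) hX'
    refine (S16.regSup_le (N := nMinus W S I ⊔ lam W S I) fun r s hrs => ?_) hc
    by_cases h2 : 0 ≤ s
    · exact le_sup_of_le_left (S16.grs_le_regSup _ ⟨hrs, h2⟩)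
    · exact le_sup_of_le_right (S16.grs_le_regSup _ ⟨hrs, by omega⟩)
  · -- conj nZero
    intro X hX
    have hX' : X ∈ S16.regSup W S I (fun rs => rs = ((0, 0) : ℤ × ℤ)) := eZero hX
    have hc := hs.region_conj (B := fun rs => rs = ((0, 0) : ℤ × ℤ) ∨ (rs.1 < 0 ∧ rs.2 < 0))
      (fun r s hA => ?_) hX'
    · refine (S16.regSup_le (N := nZero W S I ⊔ lam W S I) fun r s hrs => ?_) hc
      rcases hrs with heq | hl
      · rw [Prod.mk.injEq] at heq
        obtain ⟨rfl, rfl⟩ := heq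
        exact le_sup_left
      · exact le_sup_of_le_right (S16.grs_le_regSup _ hl)
    · rw [Prod.mk.injEq] at hA
      obtain ⟨rfl, rfl⟩ := hA
      exact ⟨Or.inl rfl, fun a b ha hb => Or.inr ⟨ha, hb⟩⟩
  · -- conj nMinus
    intro X hX
    have hX' : X ∈ S16.regSup W S I (fun rs => rs.1 < 0 ∧ 0 ≤ rs.2) := eMinus ▸ hX
    have hc := hs.region_conj (B := fun rs => rs.2 < 0)
      (fun r s hA => ⟨hA.1, fun a b ha hb => by omega⟩) hX'
    refine (S16.regSup_le (N := nPlus W S I ⊔ lam W S I) fun r s hrs => ?_) hc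
    by_cases h1 : 0 ≤ r
    · exact le_sup_of_le_left (S16.grs_le_regSup _ ⟨h1, hrs⟩)
    · exact le_sup_of_le_right (S16.grs_le_regSup _ ⟨by omega, hrs⟩)
  · -- conj lam = lam
    have hsub : ∀ Y ∈ lam W S I, conjEnd σ Y ∈ lam W S I := by
      intro Y hY
      have hY' : Y ∈ S16.regSup W S I (fun rs => rs.1 < 0 ∧ rs.2 < 0) := eLam ▸ hY
      exact hs.region_conj (B := fun rs => rs.1 < 0 ∧ rs.2 < 0)
        (fun r s hA => ⟨⟨hA.2, hA.1⟩, fun a b ha hb => ⟨by omega, by omega⟩⟩) hY'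
    refine Set.eq_of_subset_of_subset ?_ ?_
    · rintro Y ⟨X, hX, rfl⟩
      exact hsub X hX
    · intro Y hY
      exact ⟨conjEnd σ Y, hsub Y hY, hs.conjEnd_conjEnd Y⟩
end
end

section
/- Let F ∈ M with Deligne bigrading {I^{p,q}} of (F,W), let Lie(G_ℂ) and its bigrading g^{r,s} be as above, and let π_+ : Lie(G_ℂ) → n_+ = ⊕_{r≥0, s<0} g^{r,s} be the projection relative to the decomposition Lie(G_ℂ) = n_+ ⊕ n_0 ⊕ n_- ⊕ λ (with n_0 = g^{0,0}, n_- = ⊕_{r<0, s≥0} g^{r,s}, λ = ⊕_{r<0,s<0} g^{r,s}). Then for every element u of the horizontal subspace ⊕_{k≤1} g^{-1,k}, the projection of its conjugate satisfies π_+(conj(u)) ∈ g^{1,-1} ⊕ (⊕_{k≤-1} g^{0,k}). In particular, π_+(conj(u)) maps U^p := ⊕_q I^{p,q} into U^{p+1} ⊕ U^p for every p. -/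
open Submodule

noncomputable section

variable {V : Type*} [AddCommGroup V] [Module ℂ V]

variable (W : ℤ → Submodule ℂ V) (S : ℤ → V →ₗ[ℂ] V →ₗ[ℂ] ℂ)

variable (I : ℤ → ℤ → Submodule ℂ V)

/-- `U^p = ⊕_q I^{p,q}`. -/
def Upart (p : ℤ) : Submodule ℂ V := ⨆ q : ℤ, I p q


/-! ### Auxiliary lemmas -/

section Aux

theorem mem_mapsInto {α : Module.End ℂ V} {P Q : Submodule ℂ V} :
    α ∈ mapsInto P Q ↔ ∀ v ∈ P, α v ∈ Q := Iff.rfl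

/-- Independence: a finsupp with entries in independent submodules summing to zero is zero. -/
theorem aux_sum_zero_forall {ι : Type*} {p : ι → Submodule ℂ V} (hp : iSupIndep p)
    (h : ι →₀ V) (hmem : ∀ i, h i ∈ p i) (hsum : (h.sum fun _ x => x) = 0) :
    ∀ i, h i = 0 := by
  classical
  suffices H : ∀ s : Finset ι, ∀ h : ι →₀ V, h.support ⊆ s → (∀ i, h i ∈ p i) →
      (h.sum fun _ x => x) = 0 → ∀ i, h i = 0 from
    H h.support h (Finset.Subset.refl _) hmem hsum
  intro s
  induction s using Finset.induction_on with
  | empty =>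
    intro h hsup _ _ i
    have : h = 0 := Finsupp.support_eq_empty.mp (Finset.subset_empty.mp hsup)
    simp [this]
  | insert j s hj ih =>
    intro h hsup hmem hsum
    have hj0 : h j = 0 := by
      by_cases hjs : j ∈ h.support
      · have hrepr : h j + ∑ i ∈ h.support.erase j, h i = 0 := by
          rw [Finset.add_sum_erase _ _ hjs]; exact hsum
        have hmem2 : h j ∈ ⨆ (i) (_ : i ≠ j), p i := by
          rw [eq_neg_of_add_eq_zero_left hrepr]
          exact Submodule.neg_mem _ (Submodule.sum_mem _ fun i hi =>
            Submodule.mem_iSup_of_mem i (Submodule.mem_iSup_of_mem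
              (Finset.ne_of_mem_erase hi) (hmem i)))
        exact (Submodule.disjoint_def.mp (hp j)) _ (hmem j) hmem2
      · exact Finsupp.notMem_support_iff.mp hjs
    have hsub : h.support ⊆ s := by
      intro i hi
      rcases Finset.mem_insert.mp (hsup hi) with rfl | h'
      · exact absurd hj0 (Finsupp.mem_support_iff.mp hi)
      · exact h'
    exact ih h hsub hmem hsum

/-- Elements in sups of independent submodules over disjoint index sets vanish. -/
theorem aux_eq_zero_of_disjoint {ι : Type*} {p : ι → Submodule ℂ V} (hp : iSupIndep p)
    {s t : ι → Prop} (hst : ∀ i, s i → t i → False) {x : V}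
    (hxs : x ∈ ⨆ (i) (_ : s i), p i) (hxt : x ∈ ⨆ (i) (_ : t i), p i) : x = 0 := by
  classical
  obtain ⟨f, hf, hfs⟩ := (Submodule.mem_iSup_iff_exists_finsupp (fun i => ⨆ (_ : s i), p i) x).mp hxs
  obtain ⟨g, hg, hgs⟩ := (Submodule.mem_iSup_iff_exists_finsupp (fun i => ⨆ (_ : t i), p i) x).mp hxt
  have hfp : ∀ i, f i ∈ p i := fun i => by
    have hle : (⨆ (_ : s i), p i) ≤ p i := iSup_le fun _ => le_rfl
    exact hle (hf i)
  have hgp : ∀ i, g i ∈ p i := fun i => by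
    have hle : (⨆ (_ : t i), p i) ≤ p i := iSup_le fun _ => le_rfl
    exact hle (hg i)
  have hsub : ((f - g).sum fun _ x => x) = 0 := by
    rw [Finsupp.sum_sub_index (fun _ _ _ => rfl), hfs, hgs, sub_self]
  have key : ∀ i, f i - g i = 0 := by
    have := aux_sum_zero_forall hp (f - g) (fun i => Submodule.sub_mem _ (hfp i) (hgp i)) hsub
    intro i; simpa using this i
  have hfz : ∀ i, f i = 0 := by
    intro i
    by_cases hsi : s i
    · have hgz : g i = 0 := by
        have : (⨆ (_ : t i), p i) = ⊥ := iSup_neg (fun hti => hst i hsi hti)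
        simpa [this] using hg i
      have := key i
      rw [hgz, sub_zero] at this
      exact this
    · have : (⨆ (_ : s i), p i) = ⊥ := iSup_neg hsi
      simpa [this] using hf i
  have : f = 0 := Finsupp.ext hfz
  rw [← hfs, this, Finsupp.sum_zero_index]

end Aux

section Cone

variable (I : ℤ → ℤ → Submodule ℂ V)

/-- Target of a cone condition: sup of `I c d` over shifts `(c-p, d-q)` in `D`. -/
def coneT (D : ℤ → ℤ → Prop) (p q : ℤ) : Submodule ℂ V :=
  ⨆ (cd : ℤ × ℤ) (_ : D (cd.1 - p) (cd.2 - q)), I cd.1 cd.2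

/-- Endomorphisms mapping each `I p q` into the `D`-cone over `(p,q)`. -/
def coneSub (D : ℤ → ℤ → Prop) : Submodule ℂ (Module.End ℂ V) :=
  ⨅ pq : ℤ × ℤ, mapsInto (I pq.1 pq.2) (coneT I D pq.1 pq.2)

theorem mem_coneSub {D : ℤ → ℤ → Prop} {α : Module.End ℂ V} :
    α ∈ coneSub I D ↔ ∀ pq : ℤ × ℤ, ∀ v ∈ I pq.1 pq.2, α v ∈ coneT I D pq.1 pq.2 :=
  Submodule.mem_iInf _

theorem coneT_mono {D D' : ℤ → ℤ → Prop} (h : ∀ r s, D r s → D' r s) (p q : ℤ) :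
    coneT I D p q ≤ coneT I D' p q :=
  iSup₂_le fun cd hcd => le_iSup₂_of_le cd (h _ _ hcd) le_rfl

theorem mem_coneT_of (cd : ℤ × ℤ) {D : ℤ → ℤ → Prop} {p q : ℤ}
    (hD : D (cd.1 - p) (cd.2 - q)) {v : V} (hv : v ∈ I cd.1 cd.2) : v ∈ coneT I D p q :=
  Submodule.mem_iSup_of_mem cd (Submodule.mem_iSup_of_mem hD hv)

theorem endShiftI_le_coneSub {r s : ℤ} {D : ℤ → ℤ → Prop} (hD : D r s) :
    endShiftI I r s ≤ coneSub I D := by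
  intro α hα
  rw [mem_coneSub]
  intro pq v hv
  have h1 : α v ∈ I (pq.1 + r) (pq.2 + s) := (Submodule.mem_iInf _).mp hα pq v hv
  refine mem_coneT_of I (pq.1 + r, pq.2 + s) ?_ h1
  simpa [add_sub_cancel_left] using hD

theorem lowPart_le_lowPart {p q p' q' : ℤ} (hp : p ≤ p') (hq : q ≤ q') :
    lowPart I p q ≤ lowPart I p' q' :=
  iSup₂_le fun rs hrs => le_iSup₂_of_le rs ⟨hrs.1.trans_le hp, hrs.2.trans_le hq⟩ le_rfl

theorem I_le_lowPart {p q p' q' : ℤ} (hp : p < p') (hq : q < q') :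
    I p q ≤ lowPart I p' q' :=
  le_iSup₂_of_le (p, q) ⟨hp, hq⟩ le_rfl

variable {I} {σ : V →ₛₗ[starRingEnd ℂ] V} {F W : ℤ → Submodule ℂ V}

theorem sigma_I_le (hI : IsDeligne σ F W I) (p q : ℤ) :
    (I p q).map σ ≤ I q p ⊔ lowPart I q p :=
  calc (I p q).map σ ≤ (I p q).map σ ⊔ lowPart I q p := le_sup_left
    _ = I q p ⊔ lowPart I q p := (hI.2 q p).symm

theorem sigma_low_le (hI : IsDeligne σ F W I) (p q : ℤ) :
    (lowPart I p q).map σ ≤ lowPart I q p := by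
  rw [lowPart, Submodule.map_le_iff_le_comap]
  refine iSup₂_le fun rs hrs => ?_
  rw [← Submodule.map_le_iff_le_comap]
  exact (sigma_I_le hI rs.1 rs.2).trans (sup_le (I_le_lowPart I hrs.2 hrs.1)
    (lowPart_le_lowPart I hrs.2.le hrs.1.le))

set_option maxHeartbeats 1000000 in
theorem mapsInto_mono' {P Q Q' : Submodule ℂ V} (h : Q ≤ Q') :
    mapsInto P Q ≤ mapsInto P Q' :=
  fun _ hα _ hv => h (hα _ hv)

theorem coneSub_mono (I : ℤ → ℤ → Submodule ℂ V) {D D' : ℤ → ℤ → Prop}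
    (h : ∀ r s, D r s → D' r s) : coneSub I D ≤ coneSub I D' :=
  le_iInf fun pq => (iInf_le _ pq).trans (mapsInto_mono' (coneT_mono I h pq.1 pq.2))

/-- The key cone computation: if `u` shifts by `(-1, ≤1)`, its conjugate shifts by
`(≤1, -1)` or `(≤0, ≤-2)`. -/
theorem conj_mem_coneSub (hI : IsDeligne σ F W I) {u : Module.End ℂ V}
    (hu : u ∈ coneSub I (fun r s => r = -1 ∧ s ≤ 1)) :
    conjEnd σ u ∈ coneSub I
      (fun r s => (s = -1 ∧ r ≤ 1) ∨ (r ≤ 0 ∧ s ≤ -2)) := by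
  refine (mem_coneSub I).mpr ?_
  rintro ⟨p, q⟩ v hv
  suffices hgoal : σ (u (σ v)) ∈ coneT I
      (fun r s => (s = -1 ∧ r ≤ 1) ∨ (r ≤ 0 ∧ s ≤ -2)) p q from hgoal
  have h1 : σ v ∈ I q p ⊔ lowPart I q p := sigma_I_le hI p q (Submodule.mem_map_of_mem hv)
  -- intermediate cone around (q, p)
  set E : ℤ → ℤ → Prop := fun r s => (r = -1 ∧ s ≤ 1) ∨ (r ≤ -2 ∧ s ≤ 0) with hE
  have h2 : u (σ v) ∈ coneT I E q p := by
    have hle : I q p ⊔ lowPart I q p ≤ Submodule.comap u (coneT I E q p) := by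
      refine sup_le ?_ ?_
      · intro w hw
        refine Submodule.mem_comap.mpr (coneT_mono I (fun r s h => ?_) q p
          ((mem_coneSub I).mp hu (q, p) w hw))
        exact Or.inl ⟨h.1, h.2⟩
      · refine iSup₂_le fun rs hrs => ?_
        intro w hw
        refine Submodule.mem_comap.mpr ?_
        have h3 : u w ∈ coneT I (fun r s => r = -1 ∧ s ≤ 1) rs.1 rs.2 :=
          (mem_coneSub I).mp hu rs w hw
        have hmono : coneT I (fun r s => r = -1 ∧ s ≤ 1) rs.1 rs.2 ≤ coneT I E q p := by
          refine iSup₂_le fun cd hcd => le_iSup₂_of_le cd ?_ le_rfl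
          obtain ⟨h4, h5⟩ := hcd
          obtain ⟨h6, h7⟩ := hrs
          simp only [hE]
          omega
        exact hmono h3
    exact Submodule.mem_comap.mp (hle h1)
  have h3 : (coneT I E q p).map σ ≤ coneT I
      (fun r s => (s = -1 ∧ r ≤ 1) ∨ (r ≤ 0 ∧ s ≤ -2)) p q := by
    rw [coneT, Submodule.map_le_iff_le_comap]
    refine iSup₂_le fun xy hxy => ?_
    rw [← Submodule.map_le_iff_le_comap]
    refine (sigma_I_le hI xy.1 xy.2).trans (sup_le ?_ ?_)
    · refine le_iSup₂_of_le (xy.2, xy.1) ?_ le_rfl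
      simp only [hE] at hxy ⊢
      omega
    · refine iSup₂_le fun ab hab => le_iSup₂_of_le ab ?_ le_rfl
      obtain ⟨h4, h5⟩ := hab
      simp only [hE] at hxy ⊢
      omega
  exact h3 (Submodule.mem_map_of_mem h2)

end Cone
/-- For every `u` in the horizontal subspace `⊕_{k≤1} g^{-1,k}`, the
`n_+`-component of `conj u` (relative to the decomposition
`Lie(G_ℂ) = n_+ ⊕ n_0 ⊕ n_- ⊕ λ`) lies in `g^{1,-1} ⊕ (⊕_{k≤-1} g^{0,k})`; in
particular it maps `U^p = ⊕_q I^{p,q}` into `U^{p+1} ⊕ U^p` for every `p`. -/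
theorem stmt_17 [FiniteDimensional ℂ V] [Module ℚ V] [IsScalarTower ℚ ℂ V]
    (σ : V →ₛₗ[starRingEnd ℂ] V) (hσ : ∀ v, σ (σ v) = v)
    (VQ : Submodule ℚ V)
    (hQform : ∃ s : Set V, span ℚ s = VQ ∧ LinearIndependent ℂ ((↑) : s → V) ∧
      span ℂ s = ⊤)
    (hfix : ∀ v ∈ VQ, σ v = v)
    (hWfilt : IsIncFilt W)
    (hWQ : ∀ k : ℤ, W k = span ℂ ((W k : Set V) ∩ (VQ : Set V)))
    (hS : IsGradedForms W S)
    (hSrat : ∀ k : ℤ, ∀ u ∈ VQ, ∀ v ∈ VQ, ∃ q : ℚ, S k u v = (q : ℂ))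
    (h : ℤ → ℤ → ℕ)
    (F : ℤ → Submodule ℂ V) (hF : memM W S σ h F)
    (hI : IsDeligne σ F W I)
    (u : Module.End ℂ V)
    (hu : u ∈ ⨆ (s' : ℤ) (_ : s' ≤ 1), grs W S I (-1) s')
    (a b c d : Module.End ℂ V)
    (ha : a ∈ nPlus W S I) (hb : b ∈ nZero W S I)
    (hc : c ∈ nMinus W S I) (hd : d ∈ lam W S I)
    (hdecomp : conjEnd σ u = a + b + c + d) :
    a ∈ grs W S I 1 (-1) ⊔ (⨆ (s' : ℤ) (_ : s' ≤ -1), grs W S I 0 s') ∧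
    ∀ p : ℤ, ∀ v ∈ Upart I p, a v ∈ Upart I (p + 1) ⊔ Upart I p := by
  classical
  have hInt : DirectSum.IsInternal (fun pq : ℤ × ℤ => I pq.1 pq.2) := hI.1.1
  have hind : iSupIndep (fun pq : ℤ × ℤ => I pq.1 pq.2) := hInt.submodule_iSupIndep
  -- the horizontal element is in the `(-1, ≤1)` cone
  have hu' : u ∈ coneSub I (fun r s => r = -1 ∧ s ≤ 1) := by
    have hle : (⨆ (s' : ℤ) (_ : s' ≤ 1), grs W S I (-1) s') ≤
        coneSub I (fun r s => r = -1 ∧ s ≤ 1) :=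
      iSup₂_le fun s' hs' => le_trans inf_le_right (endShiftI_le_coneSub I ⟨rfl, hs'⟩)
    exact hle hu
  have hconj : conjEnd σ u ∈ coneSub I
      (fun r s => (s = -1 ∧ r ≤ 1) ∨ (r ≤ 0 ∧ s ≤ -2)) := conj_mem_coneSub hI hu'
  -- decompose `a` into graded pieces
  have ha' : a ∈ ⨆ (rs : ℤ × ℤ) (_ : 0 ≤ rs.1 ∧ rs.2 < 0), grs W S I rs.1 rs.2 := ha
  rw [iSup_subtype'] at ha'
  obtain ⟨f, hf, hfsum⟩ := (Submodule.mem_iSup_iff_exists_finsupp _ a).mp ha'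
  set G : {rs : ℤ × ℤ // 0 ≤ rs.1 ∧ rs.2 < 0} → Prop :=
    fun x => x.1.1 = 0 ∨ (x.1.1 = 1 ∧ x.1.2 = -1) with hG
  set ag : Module.End ℂ V := ∑ x ∈ f.support.filter G, f x with hag
  set abad : Module.End ℂ V := ∑ x ∈ f.support.filter (fun x => ¬ G x), f x with habad
  have hsplit : ag + abad = a := by
    rw [← hfsum, Finsupp.sum]
    exact Finset.sum_filter_add_sum_filter_not _ _ _
  -- the good part lies in the target
  have hag_mem : ag ∈ grs W S I 1 (-1) ⊔ (⨆ (s' : ℤ) (_ : s' ≤ -1), grs W S I 0 s') := by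
    refine Submodule.sum_mem _ fun x hx => ?_
    obtain ⟨hxs, hxG⟩ := Finset.mem_filter.mp hx
    obtain ⟨hr0, hs0⟩ := x.2
    rw [hG] at hxG
    rcases hxG with h0 | ⟨h1, h2⟩
    · refine Submodule.mem_sup_right ?_
      refine Submodule.mem_iSup_of_mem x.1.2 (Submodule.mem_iSup_of_mem (by omega) ?_)
      have hfx := hf x
      rw [h0] at hfx
      exact hfx
    · refine Submodule.mem_sup_left ?_
      have hfx := hf x
      rw [h1, h2] at hfx
      exact hfx
  -- the bad part satisfies two complementary cone conditions, hence vanishes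
  have habad_bad : abad ∈ coneSub I (fun r s => 1 ≤ r ∧ s ≤ -1 ∧ (2 ≤ r ∨ s ≤ -2)) := by
    refine Submodule.sum_mem _ fun x hx => ?_
    obtain ⟨hxs, hxG⟩ := Finset.mem_filter.mp hx
    obtain ⟨hr0, hs0⟩ := x.2
    rw [hG] at hxG
    have hBadx : 1 ≤ x.1.1 ∧ x.1.2 ≤ -1 ∧ (2 ≤ x.1.1 ∨ x.1.2 ≤ -2) := by omega
    exact (inf_le_right.trans (endShiftI_le_coneSub I hBadx)) (hf x)
  have habad_nb : abad ∈ coneSub I (fun r s => ¬ (1 ≤ r ∧ s ≤ -1 ∧ (2 ≤ r ∨ s ≤ -2))) := by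
    have h1 : conjEnd σ u ∈ coneSub I (fun r s => ¬ (1 ≤ r ∧ s ≤ -1 ∧ (2 ≤ r ∨ s ≤ -2))) :=
      coneSub_mono I (fun r s h => by omega) hconj
    have h2 : b ∈ coneSub I (fun r s => ¬ (1 ≤ r ∧ s ≤ -1 ∧ (2 ≤ r ∨ s ≤ -2))) :=
      (inf_le_right.trans (endShiftI_le_coneSub I (by omega))) hb
    have h3 : c ∈ coneSub I (fun r s => ¬ (1 ≤ r ∧ s ≤ -1 ∧ (2 ≤ r ∨ s ≤ -2))) := by
      have hle : (⨆ (rs : ℤ × ℤ) (_ : rs.1 < 0 ∧ 0 ≤ rs.2), grs W S I rs.1 rs.2) ≤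
          coneSub I (fun r s => ¬ (1 ≤ r ∧ s ≤ -1 ∧ (2 ≤ r ∨ s ≤ -2))) :=
        iSup₂_le fun rs hrs => inf_le_right.trans (endShiftI_le_coneSub I (by omega))
      exact hle hc
    have h4 : d ∈ coneSub I (fun r s => ¬ (1 ≤ r ∧ s ≤ -1 ∧ (2 ≤ r ∨ s ≤ -2))) := by
      have hle : (⨆ (rs : ℤ × ℤ) (_ : rs.1 < 0 ∧ rs.2 < 0), grs W S I rs.1 rs.2) ≤
          coneSub I (fun r s => ¬ (1 ≤ r ∧ s ≤ -1 ∧ (2 ≤ r ∨ s ≤ -2))) :=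
        iSup₂_le fun rs hrs => inf_le_right.trans (endShiftI_le_coneSub I (by omega))
      exact hle hd
    have h5 : ag ∈ coneSub I (fun r s => ¬ (1 ≤ r ∧ s ≤ -1 ∧ (2 ≤ r ∨ s ≤ -2))) := by
      refine Submodule.sum_mem _ fun x hx => ?_
      obtain ⟨hxs, hxG⟩ := Finset.mem_filter.mp hx
      rw [hG] at hxG
      have : ¬ (1 ≤ x.1.1 ∧ x.1.2 ≤ -1 ∧ (2 ≤ x.1.1 ∨ x.1.2 ≤ -2)) := by omega
      exact (inf_le_right.trans (endShiftI_le_coneSub I this)) (hf x)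
    have heq : abad = conjEnd σ u - b - c - d - ag := by
      rw [hdecomp, ← hsplit]
      abel
    rw [heq]
    exact Submodule.sub_mem _ (Submodule.sub_mem _ (Submodule.sub_mem _
      (Submodule.sub_mem _ h1 h2) h3) h4) h5
  have habad0 : abad = 0 := by
    refine LinearMap.ext fun v => ?_
    rw [LinearMap.zero_apply]
    have hv : v ∈ ⨆ pq : ℤ × ℤ, I pq.1 pq.2 := by
      rw [hInt.submodule_iSup_eq_top]; trivial
    refine Submodule.iSup_induction (motive := fun w => abad w = 0) _ hv (fun pq w hw => ?_)
      (map_zero _) (fun x y hx hy =>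
        show abad (x + y) = 0 by
          rw [map_add, show abad x = 0 from hx, show abad y = 0 from hy, add_zero])
    show abad w = 0
    have hA : abad w ∈ coneT I (fun r s => 1 ≤ r ∧ s ≤ -1 ∧ (2 ≤ r ∨ s ≤ -2)) pq.1 pq.2 :=
      (mem_coneSub I).mp habad_bad pq w hw
    have hB : abad w ∈ coneT I (fun r s => ¬ (1 ≤ r ∧ s ≤ -1 ∧ (2 ≤ r ∨ s ≤ -2))) pq.1 pq.2 :=
      (mem_coneSub I).mp habad_nb pq w hw
    exact aux_eq_zero_of_disjoint hind (fun cd hBc hNc => hNc hBc) hA hB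
  have ha_eq : a = ag := by rw [← hsplit, habad0, add_zero]
  constructor
  · rw [ha_eq]; exact hag_mem
  · intro p v hv
    rw [ha_eq]
    have hle : Upart I p ≤ Submodule.comap ag (Upart I (p + 1) ⊔ Upart I p) := by
      refine iSup_le fun q => ?_
      intro w hw
      refine Submodule.mem_comap.mpr ?_
      rw [hag, LinearMap.sum_apply]
      refine Submodule.sum_mem _ fun x hx => ?_
      obtain ⟨hxs, hxG⟩ := Finset.mem_filter.mp hx
      have hshift : (f x) w ∈ I (p + x.1.1) (q + x.1.2) :=
        (Submodule.mem_iInf _).mp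
          ((inf_le_right : grs W S I x.1.1 x.1.2 ≤ endShiftI I x.1.1 x.1.2) (hf x)) (p, q) w hw
      rw [hG] at hxG
      rcases hxG with h0 | ⟨h1, h2⟩
      · refine Submodule.mem_sup_right ?_
        rw [h0, add_zero] at hshift
        exact Submodule.mem_iSup_of_mem _ hshift
      · refine Submodule.mem_sup_left ?_
        rw [h1, h2] at hshift
        exact Submodule.mem_iSup_of_mem _ hshift
    exact Submodule.mem_comap.mp (hle hv)
end
end

section
/- Let (F,W) be a mixed Hodge structure on V with Deligne bigrading {I^{p,q}}. Then for every integer q one has the equality of subspaces of V: ⊕_{r ∈ ℤ, s ≤ q} I^{r,s} = Σ_{k ∈ ℤ} (W_k ∩ F^{k-q}), i.e. the direct sum of all I^{r,s} with second index s ≤ q equals the span of the subspaces W_k ∩ F^{k-q} as k ranges over ℤ. -/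
open Submodule

noncomputable section

variable {V : Type*} [AddCommGroup V] [Module ℂ V]

lemma decfilt_anti {F : ℤ → Submodule ℂ V} (h : ∀ p : ℤ, F (p + 1) ≤ F p) :
    ∀ a b : ℤ, a ≤ b → F b ≤ F a := by
  intro a b hab
  obtain ⟨n, rfl⟩ : ∃ n : ℕ, b = a + n := ⟨(b - a).toNat, by omega⟩
  clear hab
  induction n with
  | zero => simp
  | succ m ih =>
    refine le_trans ?_ ih
    have := h (a + m)
    push_cast
    convert this using 2 <;> push_cast <;> ring

lemma inf_biSup_le {ι : Type*} [DecidableEq ι] (f : ι → Submodule ℂ V)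
    (h : iSupIndep f) (p q : ι → Prop) [DecidablePred p] [DecidablePred q] :
    (⨆ i, ⨆ _ : p i, f i) ⊓ (⨆ i, ⨆ _ : q i, f i) ≤ ⨆ i, ⨆ _ : p i ∧ q i, f i := by
  intro x hx
  obtain ⟨hx1, hx2⟩ := Submodule.mem_inf.mp hx
  rw [Submodule.mem_biSup_iff_exists_dfinsupp] at hx1 hx2 ⊢
  obtain ⟨g, hg⟩ := hx1
  obtain ⟨k, hk⟩ := hx2
  have heq : g.filter p = k.filter q := h.dfinsupp_lsum_injective (hg.trans hk.symm)
  refine ⟨g, ?_⟩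
  have hfe : g.filter (fun i => p i ∧ q i) = g.filter p := by
    ext i
    simp only [DFinsupp.filter_apply]
    by_cases hp : p i
    · by_cases hq : q i
      · simp [hp, hq]
      · have := congrArg (fun d => d i) heq
        simp only [DFinsupp.filter_apply, if_pos hp, if_neg hq] at this
        simp [hp, hq, this]
    · simp [hp]
  rw [hfe, hg]

/-- For a mixed Hodge structure `(F,W)` with Deligne bigrading
`{I^{p,q}}`, for every `q` one has
`⊕_{r, s ≤ q} I^{r,s} = Σ_k (W_k ∩ F^{k-q})`. -/
theorem stmt_18 [FiniteDimensional ℂ V] [Module ℚ V] [IsScalarTower ℚ ℂ V]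
    (σ : V →ₛₗ[starRingEnd ℂ] V) (hσ : ∀ v, σ (σ v) = v)
    (VQ : Submodule ℚ V)
    (hQform : ∃ s : Set V, span ℚ s = VQ ∧ LinearIndependent ℂ ((↑) : s → V) ∧
      span ℂ s = ⊤)
    (hfix : ∀ v ∈ VQ, σ v = v)
    (F W : ℤ → Submodule ℂ V)
    (hWQ : ∀ k : ℤ, W k = span ℂ ((W k : Set V) ∩ (VQ : Set V)))
    (hMHS : IsMHS σ F W)
    (I : ℤ → ℤ → Submodule ℂ V) (hI : IsDeligne σ F W I) :
    ∀ q : ℤ,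
      (⨆ (rs : ℤ × ℤ) (_ : rs.2 ≤ q), I rs.1 rs.2) = ⨆ k : ℤ, W k ⊓ F (k - q) := by
  classical
  obtain ⟨hInt, hF, hW⟩ := hI.1
  have hdec : ∀ p : ℤ, F (p + 1) ≤ F p := hMHS.1.1
  have hind : iSupIndep (fun pq : ℤ × ℤ => I pq.1 pq.2) := hInt.submodule_iSupIndep
  intro q
  apply le_antisymm
  · refine iSup₂_le fun rs hs => ?_
    refine le_trans ?_ (le_iSup _ (rs.1 + rs.2))
    refine le_inf ?_ ?_
    · rw [hW (rs.1 + rs.2)]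
      exact le_iSup₂ (f := fun rs' (_ : rs'.1 + rs'.2 ≤ rs.1 + rs.2) => I rs'.1 rs'.2) rs le_rfl
    · refine le_trans ?_ (decfilt_anti hdec _ rs.1 (by omega))
      rw [hF rs.1]
      exact le_iSup₂ (f := fun rs' (_ : rs.1 ≤ rs'.1) => I rs'.1 rs'.2) rs le_rfl
  · refine iSup_le fun k => ?_
    rw [hW k, hF (k - q)]
    refine le_trans (inf_biSup_le (fun pq : ℤ × ℤ => I pq.1 pq.2) hind
      (fun rs => rs.1 + rs.2 ≤ k) (fun rs => k - q ≤ rs.1)) ?_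
    refine iSup₂_le fun rs hrs => ?_
    exact le_iSup₂ (f := fun rs' (_ : rs'.2 ≤ q) => I rs'.1 rs'.2) rs (by omega)
end
end

section
/- Let (F,W) be a mixed Hodge structure on V with Deligne bigrading {I^{p,q}}, and define the conjugate bigrading Ī^{r,s} := conj(I^{s,r}). Then for every integer q, Σ_{r ∈ ℤ, s ≤ q} Ī^{r,s} = Σ_{k ∈ ℤ} (W_k ∩ F^{k-q}); equivalently, the span of the subspaces conj(I^{s,r}) over all r and all s ≤ q equals ⊕_{r ∈ ℤ, s ≤ q} I^{r,s}. -/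
open Submodule

noncomputable section

variable {V : Type*} [AddCommGroup V] [Module ℂ V]

open Classical in
/-- For an independent family of submodules, the intersection of the spans of two
subfamilies is the span of the common subfamily. -/
lemma biSup_inf_biSup_indep {ι : Type*} {R M : Type*} [Ring R] [AddCommGroup M]
    [Module R M] {A : ι → Submodule R M} (h : iSupIndep A) (p q : ι → Prop) :
    (⨆ (i) (_ : p i), A i) ⊓ (⨆ (i) (_ : q i), A i) = ⨆ (i) (_ : p i ∧ q i), A i := by
  refine le_antisymm ?_ (le_inf (iSup₂_le fun i hi => le_iSup₂_of_le i hi.1 le_rfl)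
    (iSup₂_le fun i hi => le_iSup₂_of_le i hi.2 le_rfl))
  intro x hx
  obtain ⟨hx1, hx2⟩ := Submodule.mem_inf.mp hx
  rw [Submodule.mem_biSup_iff_exists_dfinsupp] at hx1 hx2 ⊢
  obtain ⟨f, hf⟩ := hx1
  obtain ⟨g, hg⟩ := hx2
  have hfg : f.filter p = g.filter q := h.dfinsupp_lsum_injective (hf.trans hg.symm)
  refine ⟨f.filter p, ?_⟩
  have hfix : (f.filter p).filter (fun i => p i ∧ q i) = f.filter p := by
    refine DFinsupp.ext fun i => ?_
    by_cases hpq : p i ∧ q i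
    · rw [DFinsupp.filter_apply_pos (p := fun i => p i ∧ q i) _ hpq]
    · rw [DFinsupp.filter_apply_neg (p := fun i => p i ∧ q i) _ hpq]
      by_cases hp : p i
      · have hq : ¬ q i := fun hq => hpq ⟨hp, hq⟩
        rw [hfg, DFinsupp.filter_apply_neg _ hq]
      · rw [DFinsupp.filter_apply_neg _ hp]
  rw [hfix]
  exact hf

set_option maxHeartbeats 2000000 in
/-- For a mixed Hodge structure `(F,W)` with Deligne bigrading
`{I^{p,q}}` and conjugate bigrading `Ī^{r,s} = conj(I^{s,r})`, for every `q` one has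
`Σ_{r, s ≤ q} Ī^{r,s} = Σ_k (W_k ∩ F^{k-q}) = ⊕_{r, s ≤ q} I^{r,s}`. -/
theorem stmt_19 [FiniteDimensional ℂ V] [Module ℚ V] [IsScalarTower ℚ ℂ V]
    (σ : V →ₛₗ[starRingEnd ℂ] V) (hσ : ∀ v, σ (σ v) = v)
    (VQ : Submodule ℚ V)
    (hQform : ∃ s : Set V, span ℚ s = VQ ∧ LinearIndependent ℂ ((↑) : s → V) ∧
      span ℂ s = ⊤)
    (hfix : ∀ v ∈ VQ, σ v = v)
    (F W : ℤ → Submodule ℂ V)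
    (hWQ : ∀ k : ℤ, W k = span ℂ ((W k : Set V) ∩ (VQ : Set V)))
    (hMHS : IsMHS σ F W)
    (I : ℤ → ℤ → Submodule ℂ V) (hI : IsDeligne σ F W I) :
    ∀ q : ℤ,
      ((⨆ (rs : ℤ × ℤ) (_ : rs.2 ≤ q), (I rs.2 rs.1).map σ) =
        ⨆ k : ℤ, W k ⊓ F (k - q)) ∧
      (⨆ (rs : ℤ × ℤ) (_ : rs.2 ≤ q), (I rs.2 rs.1).map σ) =
        ⨆ (rs : ℤ × ℤ) (_ : rs.2 ≤ q), I rs.1 rs.2 := by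
  obtain ⟨⟨hFdec, _, ⟨bF, hbF⟩⟩, ⟨hWinc, ⟨aW, haW⟩, _⟩, _, _⟩ := hMHS
  obtain ⟨⟨hint, hF, hW⟩, hDel⟩ := hI
  have hFanti : Antitone F := antitone_int_of_succ_le hFdec
  have hWmono : Monotone W := monotone_int_of_le_succ hWinc
  have indep : iSupIndep (fun pq : ℤ × ℤ => I pq.1 pq.2) := hint.submodule_iSupIndep
  have hIW : ∀ r s : ℤ, I r s ≤ W (r + s) := by
    intro r s
    rw [hW (r + s)]
    exact le_iSup₂_of_le ((r, s) : ℤ × ℤ) le_rfl le_rfl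
  have hIF : ∀ r s : ℤ, I r s ≤ F r := by
    intro r s
    rw [hF r]
    exact le_iSup₂_of_le ((r, s) : ℤ × ℤ) le_rfl le_rfl
  have hcd : ∀ r s : ℤ, (I s r).map σ ≤ I r s ⊔ lowPart I r s := fun r s =>
    le_sup_left.trans (hDel r s).ge
  have hdc : ∀ r s : ℤ, I r s ≤ (I s r).map σ ⊔ lowPart I r s := fun r s =>
    le_sup_left.trans (hDel r s).le
  have hAmono : ∀ s s' : ℤ, s ≤ s' →
      (⨆ (rs : ℤ × ℤ) (_ : rs.2 ≤ s), (I rs.2 rs.1).map σ) ≤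
        ⨆ (rs : ℤ × ℤ) (_ : rs.2 ≤ s'), (I rs.2 rs.1).map σ := fun s s' h =>
    iSup₂_le fun rs hrs => le_iSup₂_of_le rs (hrs.trans h) le_rfl
  -- key induction: every `I r s` lies in the span of the conjugate pieces with
  -- second index `≤ s`
  have key : ∀ n : ℕ, ∀ s r : ℤ, s ≤ (aW - bF) + n →
      I r s ≤ ⨆ (rs : ℤ × ℤ) (_ : rs.2 ≤ s), (I rs.2 rs.1).map σ := by
    intro n
    induction n with
    | zero =>
      intro s r hs
      rcases le_or_gt bF r with h | h
      · exact le_trans (le_trans ((hIF r s).trans (hFanti h)) hbF.le) bot_le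
      · exact le_trans (le_trans ((hIW r s).trans (hWmono (by omega : r + s ≤ aW)))
          haW.le) bot_le
    | succ n ih =>
      intro s r hs
      rcases le_or_gt s ((aW - bF) + n) with h | h
      · exact ih s r h
      · refine (hdc r s).trans (sup_le (le_iSup₂_of_le ((r, s) : ℤ × ℤ) le_rfl le_rfl) ?_)
        refine iSup₂_le fun uv huv => ?_
        exact (ih uv.2 uv.1 (by omega)).trans (hAmono uv.2 s huv.2.le)
  intro q
  -- A q = B q
  have hAB : (⨆ (rs : ℤ × ℤ) (_ : rs.2 ≤ q), (I rs.2 rs.1).map σ) =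
      ⨆ (rs : ℤ × ℤ) (_ : rs.2 ≤ q), I rs.1 rs.2 := by
    refine le_antisymm (iSup₂_le fun rs hrs => (hcd rs.1 rs.2).trans (sup_le
      (le_iSup₂_of_le rs hrs le_rfl)
      (iSup₂_le fun uv huv => le_iSup₂_of_le uv (huv.2.le.trans hrs) le_rfl))) ?_
    refine iSup₂_le fun rs hrs => ?_
    have hn : rs.2 ≤ (aW - bF) + ((rs.2 - (aW - bF)).toNat : ℤ) := by omega
    exact (key (rs.2 - (aW - bF)).toNat rs.2 rs.1 hn).trans (hAmono rs.2 q hrs)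
  refine ⟨?_, hAB⟩
  rw [hAB]
  -- B q = ⨆ k, W k ⊓ F (k - q)
  refine le_antisymm (iSup₂_le fun rs hrs => le_iSup_of_le (rs.1 + rs.2) (le_inf
    (hIW rs.1 rs.2)
    ((hIF rs.1 rs.2).trans (hFanti (by omega : rs.1 + rs.2 - q ≤ rs.1))))) ?_
  refine iSup_le fun k => ?_
  rw [hW k, hF (k - q), biSup_inf_biSup_indep indep]
  exact iSup₂_le fun rs hrs => le_iSup₂_of_le rs (by omega) le_rfl
end
end
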